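/- arXiv:2009.09862 — 4 statements merged into one kernel-verified Lean document; each statement's English description precedes it below -/
import Mathlib

section
/- Let f : {(a,b) ∈ [0,1]² : a ≤ b} → ℝ be continuous with f(a,a) = 0 for all a. Then there exist 0 ≤ x ≤ y ≤ 1 with f(0,x) = f(x,y) = f(y,1). -/
open Set Complex Finset Real

namespace Equi3

/-- If `w` is closer to `z` than `z` is to `0`, then `w/z` has positive real part. -/
lemma nearpos {z w : ℂ} (hz : z ≠ 0) (h : ‖w - z‖ < ‖z‖) :
    0 < (w / z).re := by
  have hz' : 0 < ‖z‖ := by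
    exact norm_pos_iff.mpr hz
  have h1 : w / z = 1 + (w - z) / z := by field_simp; ring
  have h2 : ‖(w - z) / z‖ < 1 := by
    rw [norm_div, div_lt_one hz']; exact h
  have h3 := Complex.abs_re_le_norm ((w - z) / z)
  have h4 := abs_lt.mp (lt_of_le_of_lt h3 h2)
  rw [h1, Complex.add_re, Complex.one_re]
  linarith [h4.1]

lemma div_ne_zero_of_re_pos {u a : ℂ} (ha : 0 < (a / u).re) : a ≠ 0 := by
  intro h; rw [h] at ha; simp at ha

/-- Difference formula for arguments of points in a common half-plane. -/
lemma argdiff {u a b : ℂ} (hu : u ≠ 0) (ha : 0 < (a / u).re) (hb : 0 < (b / u).re) :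
    Complex.arg (b / a) = Complex.arg (b / u) - Complex.arg (a / u) := by
  have ha0 : a ≠ 0 := div_ne_zero_of_re_pos ha
  have hb0 : b ≠ 0 := div_ne_zero_of_re_pos hb
  have hau : a / u ≠ 0 := by
    intro h; rw [h] at ha; simp at ha
  have hbu : b / u ≠ 0 := by
    intro h; rw [h] at hb; simp at hb
  have h1 : b / a = (b / u) / (a / u) := by
    field_simp
  have h2 : (Complex.arg (b / a) : Real.Angle)
      = ((Complex.arg (b / u) - Complex.arg (a / u) : ℝ) : Real.Angle) := by
    rw [h1, Complex.arg_div_coe_angle hbu hau, Real.Angle.coe_sub]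
  obtain ⟨k, hk⟩ := Real.Angle.angle_eq_iff_two_pi_dvd_sub.mp h2
  have hb2 : |Complex.arg (b / u)| < π / 2 :=
    Complex.abs_arg_lt_pi_div_two_iff.mpr (Or.inl hb)
  have ha2 : |Complex.arg (a / u)| < π / 2 :=
    Complex.abs_arg_lt_pi_div_two_iff.mpr (Or.inl ha)
  have h3 := Complex.arg_le_pi (b / a)
  have h4 := Complex.neg_pi_lt_arg (b / a)
  have hπ := Real.pi_pos
  have hb3 := abs_lt.mp hb2
  have ha3 := abs_lt.mp ha2
  have hk0 : k = 0 := by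
    have h5 : -1 < (k : ℝ) ∧ (k : ℝ) < 1 := by constructor <;> nlinarith
    have h6 : -1 < k ∧ k < 1 := by exact_mod_cast h5
    omega
  rw [hk0] at hk
  push_cast at hk
  linarith

/-- Four points in a common half-plane: the two ways around agree. -/
lemma cell4 {u z1 z2 z3 z4 : ℂ} (hu : u ≠ 0) (h1 : 0 < (z1 / u).re) (h2 : 0 < (z2 / u).re)
    (h3 : 0 < (z3 / u).re) (h4 : 0 < (z4 / u).re) :
    Complex.arg (z2 / z1) + Complex.arg (z3 / z2)
      = Complex.arg (z4 / z1) + Complex.arg (z3 / z4) := by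
  rw [argdiff hu h1 h2, argdiff hu h2 h3, argdiff hu h1 h4, argdiff hu h4 h3]
  ring

/-- Discrete argument-variation of a path along the uniform grid of `[0,1]`. -/
noncomputable def dvar (c : ℝ → ℂ) (N : ℕ) : ℝ :=
  ∑ j ∈ Finset.range N, Complex.arg (c (((j : ℝ) + 1) / N) / c ((j : ℝ) / N))

lemma dvar_congr {c d : ℝ → ℂ} {N : ℕ} (hN : 0 < N)
    (h : ∀ t ∈ Icc (0 : ℝ) 1, c t = d t) : dvar c N = dvar d N := by
  unfold dvar
  refine Finset.sum_congr rfl fun j hj => ?_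
  have hjN : (j : ℝ) < N := by exact_mod_cast Finset.mem_range.mp hj
  have hjN1 : (j : ℝ) + 1 ≤ N := by
    exact_mod_cast Nat.succ_le_of_lt (Finset.mem_range.mp hj)
  have hN' : (0 : ℝ) < N := by exact_mod_cast hN
  have h1 : ((j : ℝ) + 1) / N ∈ Icc (0 : ℝ) 1 := by
    constructor
    · positivity
    · rw [div_le_one hN']; linarith
  have h2 : (j : ℝ) / N ∈ Icc (0 : ℝ) 1 := by
    constructor
    · positivity
    · rw [div_le_one hN']; linarith
  rw [h _ h1, h _ h2]

lemma dvar_const (a : ℂ) (N : ℕ) : dvar (fun _ => a) N = 0 := by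
  unfold dvar
  rcases eq_or_ne a 0 with h | h
  · simp [h]
  · simp [div_self h]

lemma dvar_smul {a : ℂ} (ha : a ≠ 0) (c : ℝ → ℂ) (N : ℕ) :
    dvar (fun t => a * c t) N = dvar c N := by
  unfold dvar
  refine Finset.sum_congr rfl fun j _ => ?_
  rw [mul_div_mul_left _ _ ha]

lemma dvar_conj (c : ℝ → ℂ) (N : ℕ)
    (h : ∀ j < N, 0 < (c (((j : ℝ) + 1) / N) / c ((j : ℝ) / N)).re) :
    dvar (fun t => (starRingEnd ℂ) (c t)) N = - dvar c N := by
  unfold dvar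
  rw [← Finset.sum_neg_distrib]
  refine Finset.sum_congr rfl fun j hj => ?_
  have hj' := h j (Finset.mem_range.mp hj)
  rw [← map_div₀, Complex.arg_conj]
  have : Complex.arg (c (((j : ℝ) + 1) / N) / c ((j : ℝ) / N)) ≠ π := by
    intro hpi
    have := Complex.arg_eq_pi_iff.mp hpi
    linarith [this.1]
  simp [this]


lemma grid_mem {N j : ℕ} (hN : 0 < N) (hj : j ≤ N) : (j : ℝ) / N ∈ Icc (0 : ℝ) 1 := by
  have hN' : (0 : ℝ) < N := by exact_mod_cast hN
  have : (j : ℝ) ≤ N := by exact_mod_cast hj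
  constructor
  · positivity
  · rw [div_le_one hN']; linarith

/-- The discrete variation reduces mod `2π` to the difference of endpoint arguments. -/
lemma dvar_angle (c : ℝ → ℂ) (N : ℕ) (hN : 0 < N)
    (h : ∀ j ≤ N, c ((j : ℝ) / N) ≠ 0) :
    ((dvar c N : ℝ) : Real.Angle)
      = ((Complex.arg (c 1) : Real.Angle) - (Complex.arg (c 0) : Real.Angle)) := by
  have hNR : ((N : ℝ)) ≠ 0 := by
    have : (0:ℝ) < N := by exact_mod_cast hN
    linarith
  unfold dvar
  rw [← Real.Angle.coe_coeHom, map_sum]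
  have h1 : ∀ j ∈ Finset.range N,
      (Real.Angle.coeHom (Complex.arg (c (((j : ℝ) + 1) / N) / c ((j : ℝ) / N))))
        = (fun j : ℕ => ((Complex.arg (c ((j : ℝ) / N)) : Real.Angle))) (j + 1)
          - (fun j : ℕ => ((Complex.arg (c ((j : ℝ) / N)) : Real.Angle))) j := by
    intro j hj
    have hjr := Finset.mem_range.mp hj
    have e1 : (((j + 1 : ℕ) : ℝ)) = (j : ℝ) + 1 := by push_cast; ring
    have hz1 : c (((j : ℝ) + 1) / N) ≠ 0 := by rw [← e1]; exact h (j+1) (by omega)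
    have hz0 : c ((j : ℝ) / N) ≠ 0 := h j (by omega)
    simp only [Real.Angle.coe_coeHom, e1]
    exact Complex.arg_div_coe_angle hz1 hz0
  rw [Finset.sum_congr rfl h1, Finset.sum_range_sub
    (fun j : ℕ => ((Complex.arg (c ((j : ℝ) / N)) : Real.Angle)))]
  have e2 : ((N : ℝ)) / N = 1 := div_self hNR
  have e3 : ((0 : ℕ) : ℝ) / N = 0 := by simp
  rw [e2, e3]
  simp [Real.Angle.coe_coeHom]


lemma arg_one_add_I : Complex.arg (1 + Complex.I) = π / 4 := by
  have h2 : (0:ℝ) < Real.sqrt 2 := Real.sqrt_pos.mpr (by norm_num)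
  have h1 : Real.sqrt 2 * (Real.sqrt 2 / 2) = 1 := by
    have := Real.mul_self_sqrt (by norm_num : (0:ℝ) ≤ 2)
    nlinarith
  have hc : ((Real.sqrt 2 : ℝ) : ℂ) * ((Real.sqrt 2 / 2 : ℝ) : ℂ) = 1 := by
    rw [← Complex.ofReal_mul, h1, Complex.ofReal_one]
  have key : (1 + Complex.I)
      = (Real.sqrt 2 : ℝ) * (Complex.cos ((π/4 : ℝ) : ℂ) + Complex.sin ((π/4 : ℝ) : ℂ) * Complex.I) := by
    rw [← Complex.ofReal_cos, ← Complex.ofReal_sin, Real.cos_pi_div_four, Real.sin_pi_div_four,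
      mul_add, ← mul_assoc, hc, one_mul]
  rw [key, Complex.arg_real_mul _ h2, Complex.arg_cos_add_sin_mul_I]
  constructor
  · nlinarith [Real.pi_pos]
  · nlinarith [Real.pi_pos]

/-- The discrete variation of the ramp `t ↦ I - t` equals `π/4`. -/
lemma dvar_ramp (N : ℕ) (hN : 0 < N) : dvar (fun t => Complex.I - (t : ℂ)) N = π / 4 := by
  have hNR : ((N : ℝ)) ≠ 0 := by
    have : (0:ℝ) < N := by exact_mod_cast hN
    linarith
  have hI : (Complex.I) ≠ 0 := Complex.I_ne_zero
  have hq : ∀ t : ℝ, (Complex.I - (t:ℂ)) / Complex.I = 1 + (t:ℂ) * Complex.I := by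
    intro t
    rw [div_eq_iff hI, add_mul, one_mul, mul_assoc, Complex.I_mul_I]
    ring
  have hre : ∀ t : ℝ, ((Complex.I - (t:ℂ)) / Complex.I).re = 1 := by
    intro t
    rw [hq t]
    simp
  have key : ∀ j ∈ Finset.range N,
      Complex.arg ((Complex.I - ((((j:ℝ)+1)/N : ℝ):ℂ)) / (Complex.I - (((j:ℝ)/N : ℝ):ℂ)))
        = (fun j : ℕ => Complex.arg ((Complex.I - (((j:ℝ)/N : ℝ):ℂ)) / Complex.I)) (j+1)
          - (fun j : ℕ => Complex.arg ((Complex.I - (((j:ℝ)/N : ℝ):ℂ)) / Complex.I)) j := by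
    intro j hj
    have e1 : (((j + 1 : ℕ) : ℝ)) = (j : ℝ) + 1 := by push_cast; ring
    simp only [e1]
    exact argdiff hI (by rw [hre]; norm_num) (by rw [hre]; norm_num)
  unfold dvar
  rw [Finset.sum_congr rfl key, Finset.sum_range_sub
    (fun j : ℕ => Complex.arg ((Complex.I - (((j:ℝ)/N : ℝ):ℂ)) / Complex.I))]
  have e2 : ((N : ℝ)) / N = 1 := div_self hNR
  have e3 : ((0 : ℕ) : ℝ) / N = 0 := by simp
  rw [e2, e3, hq 1, hq 0]
  push_cast
  rw [one_mul, zero_mul, add_zero, arg_one_add_I, Complex.arg_one]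
  ring


/-- The unit square. -/
def Qs : Set (ℝ × ℝ) := Icc (0:ℝ) 1 ×ˢ Icc (0:ℝ) 1

theorem grid (F : ℝ × ℝ → ℂ) (hF : ContinuousOn F Qs) (h0 : ∀ z ∈ Qs, F z ≠ 0) :
    ∃ N₀ : ℕ, 0 < N₀ ∧ ∀ N, N₀ ≤ N →
      ((∀ u ∈ Qs, ∀ v ∈ Qs, dist u v ≤ 1 / (N:ℝ) → 0 < (F v / F u).re) ∧
        dvar (fun t => F (t, 0)) N + dvar (fun t => F (1, t)) N
          = dvar (fun t => F (t, 1)) N + dvar (fun t => F (0, t)) N) := by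
  have hQc : IsCompact Qs := isCompact_Icc.prod isCompact_Icc
  have hne : Qs.Nonempty := ⟨(0,0), ⟨⟨le_refl _, zero_le_one⟩, ⟨le_refl _, zero_le_one⟩⟩⟩
  have habs : ContinuousOn (fun z => ‖F z‖) Qs :=
    continuous_norm.comp_continuousOn hF
  obtain ⟨z₀, hz₀Q, hmin⟩ := hQc.exists_isMinOn hne habs
  set ε := ‖F z₀‖ with hεdef
  have hε : 0 < ε := by
    have := h0 z₀ hz₀Q
    exact norm_pos_iff.mpr this
  have huc := hQc.uniformContinuousOn_of_continuous hF
  rw [Metric.uniformContinuousOn_iff] at huc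
  obtain ⟨δ, hδ, hucd⟩ := huc ε hε
  refine ⟨⌈1/δ⌉₊ + 1, Nat.succ_pos _, fun N hN => ?_⟩
  have hNpos : 0 < N := lt_of_lt_of_le (Nat.succ_pos _) hN
  have hNR : (0:ℝ) < N := by exact_mod_cast hNpos
  have hNd : 1 / (N:ℝ) < δ := by
    have h1 : (1/δ : ℝ) < N := by
      calc (1/δ : ℝ) ≤ ⌈1/δ⌉₊ := Nat.le_ceil _
      _ < (⌈1/δ⌉₊ + 1 : ℕ) := by exact_mod_cast Nat.lt_succ_self _
      _ ≤ N := by exact_mod_cast hN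
    rw [div_lt_iff₀ hNR]
    rw [div_lt_iff₀ hδ] at h1
    linarith [mul_comm δ (N:ℝ)]
  have hfine : ∀ u ∈ Qs, ∀ v ∈ Qs, dist u v ≤ 1 / (N:ℝ) → 0 < (F v / F u).re := by
    intro u hu v hv hd
    have h1 : dist (F u) (F v) < ε := hucd u hu v hv (lt_of_le_of_lt hd hNd)
    have h2 : ε ≤ ‖F u‖ := hmin hu
    apply nearpos (h0 u hu)
    rw [Complex.dist_eq] at h1
    calc ‖F v - F u‖ = ‖F u - F v‖ := by
          rw [norm_sub_rev]
    _ < ε := h1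
    _ ≤ _ := h2
  refine ⟨hfine, ?_⟩
  set x : ℕ → ℝ := fun i => (i:ℝ)/N with hxdef
  have hxmem : ∀ i : ℕ, i ≤ N → x i ∈ Icc (0:ℝ) 1 := fun i hi => grid_mem hNpos hi
  have hxdist : ∀ i : ℕ, dist (x (i+1)) (x i) = 1/(N:ℝ) := by
    intro i
    rw [hxdef]
    simp only [Real.dist_eq]
    push_cast
    rw [div_sub_div_same]
    have e : (i:ℝ) + 1 - i = 1 := by ring
    rw [e, _root_.abs_of_nonneg (by positivity : (0:ℝ) ≤ 1/(N:ℝ))]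
  have hmemQ : ∀ i j : ℕ, i ≤ N → j ≤ N → ((x i, x j) : ℝ × ℝ) ∈ Qs :=
    fun i j hi hj => ⟨hxmem i hi, hxmem j hj⟩
  have hxdist' : ∀ i : ℕ, dist (x i) (x (i+1)) = 1/(N:ℝ) := by
    intro i; rw [dist_comm]; exact hxdist i
  -- edge quotient positivity between adjacent grid points
  have hadjh : ∀ i j : ℕ, i < N → j ≤ N →
      0 < (F (x (i+1), x j) / F (x i, x j)).re := by
    intro i j hi hj
    apply hfine _ (hmemQ i j (le_of_lt hi) hj) _ (hmemQ (i+1) j hi hj)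
    rw [Prod.dist_eq]
    simp only [dist_self]
    rw [hxdist' i]
    exact max_le (le_refl _) (by positivity)
  have hadjv : ∀ i j : ℕ, i ≤ N → j < N →
      0 < (F (x i, x (j+1)) / F (x i, x j)).re := by
    intro i j hi hj
    apply hfine _ (hmemQ i j hi (le_of_lt hj)) _ (hmemQ i (j+1) hi hj)
    rw [Prod.dist_eq]
    simp only [dist_self]
    rw [hxdist' j]
    exact max_le (by positivity) (le_refl _)
  have hadjd : ∀ i j : ℕ, i < N → j < N →
      0 < (F (x (i+1), x (j+1)) / F (x i, x j)).re := by
    intro i j hi hj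
    apply hfine _ (hmemQ i j (le_of_lt hi) (le_of_lt hj)) _ (hmemQ (i+1) (j+1) hi hj)
    rw [Prod.dist_eq]
    rw [hxdist' i, hxdist' j]
    exact max_le (le_refl _) (le_refl _)
  set eh : ℕ → ℕ → ℝ := fun i j => Complex.arg (F (x (i+1), x j) / F (x i, x j)) with hehdef
  set ev : ℕ → ℕ → ℝ := fun i j => Complex.arg (F (x i, x (j+1)) / F (x i, x j)) with hevdef
  have cell : ∀ i ∈ Finset.range N, ∀ j ∈ Finset.range N,
      eh i j - eh i (j+1) = ev i j - ev (i+1) j := by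
    intro i hi j hj
    have hi' := Finset.mem_range.mp hi
    have hj' := Finset.mem_range.mp hj
    have hu : F (x i, x j) ≠ 0 := h0 _ (hmemQ i j (le_of_lt hi') (le_of_lt hj'))
    have h1 : 0 < (F (x i, x j) / F (x i, x j)).re := by
      rw [div_self hu]; norm_num
    have h2 := hadjh i j hi' (le_of_lt hj')
    have h3 := hadjd i j hi' hj'
    have h4 := hadjv i j (le_of_lt hi') hj'
    have key := cell4 hu h1 h2 h3 h4
    -- key : arg(z2/z1) + arg(z3/z2) = arg(z4/z1) + arg(z3/z4)
    have e1 : eh i j = Complex.arg (F (x (i+1), x j) / F (x i, x j)) := rfl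
    have e2 : ev (i+1) j = Complex.arg (F (x (i+1), x (j+1)) / F (x (i+1), x j)) := rfl
    have e3 : ev i j = Complex.arg (F (x i, x (j+1)) / F (x i, x j)) := rfl
    have e4 : eh i (j+1) = Complex.arg (F (x (i+1), x (j+1)) / F (x i, x (j+1))) := rfl
    rw [e1, e2, e3, e4] at *
    linarith [key]
  have tele1 : ∑ i ∈ Finset.range N, (eh i 0 - eh i N)
      = ∑ j ∈ Finset.range N, (ev 0 j - ev N j) := by
    calc ∑ i ∈ Finset.range N, (eh i 0 - eh i N)
        = ∑ i ∈ Finset.range N, ∑ j ∈ Finset.range N, (eh i j - eh i (j+1)) := by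
          refine Finset.sum_congr rfl fun i _ => ?_
          rw [Finset.sum_range_sub' (fun j => eh i j) N]
    _ = ∑ i ∈ Finset.range N, ∑ j ∈ Finset.range N, (ev i j - ev (i+1) j) := by
          refine Finset.sum_congr rfl fun i hi => Finset.sum_congr rfl fun j hj => ?_
          exact cell i hi j hj
    _ = ∑ j ∈ Finset.range N, ∑ i ∈ Finset.range N, (ev i j - ev (i+1) j) := Finset.sum_comm
    _ = ∑ j ∈ Finset.range N, (ev 0 j - ev N j) := by
          refine Finset.sum_congr rfl fun j _ => ?_
          rw [Finset.sum_range_sub' (fun i => ev i j) N]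
  rw [Finset.sum_sub_distrib, Finset.sum_sub_distrib] at tele1
  -- identify the four dvar edge sums
  have hx0 : x 0 = 0 := by simp [hxdef]
  have hxN : x N = 1 := by
    rw [hxdef]
    exact div_self (by exact_mod_cast (Nat.pos_iff_ne_zero.mp hNpos))
  have hxs : ∀ j : ℕ, x (j+1) = ((j:ℝ)+1)/N := by
    intro j; rw [hxdef]; push_cast; ring_nf
  have hbot : dvar (fun t => F (t, 0)) N = ∑ i ∈ Finset.range N, eh i 0 := by
    unfold dvar
    refine Finset.sum_congr rfl fun i _ => ?_
    rw [hehdef]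
    push_cast [hxdef, div_self (ne_of_gt hNR), zero_div]
    ring_nf
  have htop : dvar (fun t => F (t, 1)) N = ∑ i ∈ Finset.range N, eh i N := by
    unfold dvar
    refine Finset.sum_congr rfl fun i _ => ?_
    rw [hehdef]
    push_cast [hxdef, div_self (ne_of_gt hNR), zero_div]
    ring_nf
  have hlef : dvar (fun t => F (0, t)) N = ∑ j ∈ Finset.range N, ev 0 j := by
    unfold dvar
    refine Finset.sum_congr rfl fun j _ => ?_
    rw [hevdef]
    push_cast [hxdef, div_self (ne_of_gt hNR), zero_div]
    ring_nf
  have hrig : dvar (fun t => F (1, t)) N = ∑ j ∈ Finset.range N, ev N j := by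
    unfold dvar
    refine Finset.sum_congr rfl fun j _ => ?_
    rw [hevdef]
    push_cast [hxdef, div_self (ne_of_gt hNR), zero_div]
    ring_nf
  rw [hbot, htop, hlef, hrig]
  linarith [tele1]


lemma reim_eq_zero {a b : ℝ} : ((a:ℂ) + (b:ℂ) * Complex.I = 0) ↔ a = 0 ∧ b = 0 := by
  constructor
  · intro h
    have hre := congrArg Complex.re h
    have him := congrArg Complex.im h
    simp at hre him
    exact ⟨hre, him⟩
  · rintro ⟨h1, h2⟩
    simp [h1, h2]

lemma conj_reim (a b : ℝ) :
    (starRingEnd ℂ) ((a:ℂ) + (b:ℂ) * Complex.I) = (a:ℂ) + ((-b : ℝ):ℂ) * Complex.I := by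
  simp [Complex.ext_iff]

lemma I_mul_reim (a b : ℝ) :
    Complex.I * ((a:ℂ) + (b:ℂ) * Complex.I) = ((-b:ℝ):ℂ) + ((a:ℝ):ℂ) * Complex.I := by
  simp [Complex.ext_iff]

lemma dist_pair_h (a b c : ℝ) : dist ((a, c) : ℝ × ℝ) ((b, c)) = dist a b := by
  rw [Prod.dist_eq]
  simp only [dist_self]
  exact max_eq_left dist_nonneg

lemma dist_pair_v (a b c : ℝ) : dist ((c, a) : ℝ × ℝ) ((c, b)) = dist a b := by
  rw [Prod.dist_eq]
  simp only [dist_self]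
  exact max_eq_right dist_nonneg

lemma dist_grid {N : ℕ} (hN : 0 < N) (j : ℕ) :
    dist ((j:ℝ)/N) (((j:ℝ)+1)/N) = 1/(N:ℝ) := by
  have hNR : (0:ℝ) < N := by exact_mod_cast hN
  rw [Real.dist_eq, div_sub_div_same]
  have e : (j:ℝ) - ((j:ℝ)+1) = -1 := by ring
  rw [e]
  rw [abs_div]
  simp [abs_of_pos hNR]

set_option maxHeartbeats 2000000 in
lemma core (f : ℝ × ℝ → ℝ)
    (hf : ContinuousOn f {q : ℝ × ℝ | 0 ≤ q.1 ∧ q.1 ≤ q.2 ∧ q.2 ≤ 1})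
    (hdeg : ∀ a ∈ Icc (0:ℝ) 1, f (a, a) = 0)
    (hpos : 0 < f (0, 1))
    (hno : ∀ x y : ℝ, 0 ≤ x → x ≤ y → y ≤ 1 →
      f (0, x) = f (x, y) → f (x, y) ≠ f (y, 1)) : False := by
  set T : Set (ℝ × ℝ) := {q : ℝ × ℝ | 0 ≤ q.1 ∧ q.1 ≤ q.2 ∧ q.2 ≤ 1} with hTdef
  set p : ℝ → ℝ := fun t => f (0, t) with hpdef
  set q : ℝ → ℝ := fun t => f (t, 1) with hqdef
  set c₀ : ℝ := f (0, 1) with hc0def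
  have hp0 : p 0 = 0 := hdeg 0 ⟨le_refl _, zero_le_one⟩
  have hq1 : q 1 = 0 := hdeg 1 ⟨zero_le_one, le_refl _⟩
  have hp1 : p 1 = c₀ := rfl
  have hq0 : q 0 = c₀ := rfl
  have hc0 : c₀ ≠ 0 := ne_of_gt hpos
  have hsol : ∀ a b : ℝ, 0 ≤ a → a ≤ b → b ≤ 1 → p a = f (a, b) → f (a, b) = q b → False :=
    fun a b h1 h2 h3 e1 e2 => hno a b h1 h2 h3 e1 e2
  -- complex paths
  set γ : ℝ → ℂ := fun t => ((p t : ℝ):ℂ) + ((q t : ℝ):ℂ) * Complex.I with hγdef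
  set pγ : ℝ → ℂ := fun t => ((p t - q t : ℝ):ℂ) + ((q t : ℝ):ℂ) * Complex.I with hpγdef
  set δ₂ : ℝ → ℂ := fun t => ((q t : ℝ):ℂ) + ((p t : ℝ):ℂ) * Complex.I with hδ₂def
  set pδ₂ : ℝ → ℂ := fun t => ((q t - p t : ℝ):ℂ) + ((p t : ℝ):ℂ) * Complex.I with hpδ₂def
  -- the three nonvanishing maps on the square
  set F₁ : ℝ × ℝ → ℂ := fun z =>
    ((p (min z.1 z.2) - f (min z.1 z.2, z.2) : ℝ):ℂ)
      + ((q z.2 - f (min z.1 z.2, z.2) : ℝ):ℂ) * Complex.I with hF₁def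
  set G₁ : ℝ × ℝ → ℂ := fun z =>
    ((p z.1 - z.2 * q z.1 : ℝ):ℂ) + ((q z.1 : ℝ):ℂ) * Complex.I with hG₁def
  set G₂ : ℝ × ℝ → ℂ := fun z =>
    ((q z.1 - z.2 * p z.1 : ℝ):ℂ) + ((p z.1 : ℝ):ℂ) * Complex.I with hG₂def
  -- continuity facts
  have hpc : ContinuousOn (fun z : ℝ × ℝ => p z.1) Qs := by
    apply hf.comp (Continuous.continuousOn (by continuity))
    intro z hz
    exact ⟨le_refl _, hz.1.1, hz.1.2⟩
  have hqc : ContinuousOn (fun z : ℝ × ℝ => q z.1) Qs := by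
    apply hf.comp (Continuous.continuousOn (by continuity))
    intro z hz
    exact ⟨hz.1.1, hz.1.2, le_refl _⟩
  have hq2c : ContinuousOn (fun z : ℝ × ℝ => q z.2) Qs := by
    apply hf.comp (Continuous.continuousOn (by continuity))
    intro z hz
    exact ⟨hz.2.1, hz.2.2, le_refl _⟩
  have hpminc : ContinuousOn (fun z : ℝ × ℝ => p (min z.1 z.2)) Qs := by
    apply hf.comp (Continuous.continuousOn (by continuity))
    intro z hz
    exact ⟨le_refl _, le_min hz.1.1 hz.2.1, le_trans (min_le_right _ _) hz.2.2⟩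
  have hfminc : ContinuousOn (fun z : ℝ × ℝ => f (min z.1 z.2, z.2)) Qs := by
    apply hf.comp (Continuous.continuousOn (by continuity))
    intro z hz
    exact ⟨le_min hz.1.1 hz.2.1, min_le_right _ _, hz.2.2⟩
  have mkc : ∀ u v : ℝ × ℝ → ℝ, ContinuousOn u Qs → ContinuousOn v Qs →
      ContinuousOn (fun z => ((u z : ℝ):ℂ) + ((v z : ℝ):ℂ) * Complex.I) Qs := by
    intro u v hu hv
    exact (Complex.continuous_ofReal.comp_continuousOn hu).add
      ((Complex.continuous_ofReal.comp_continuousOn hv).mul continuousOn_const)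
  have hF₁c : ContinuousOn F₁ Qs := mkc _ _ (hpminc.sub hfminc) (hq2c.sub hfminc)
  have hG₁c : ContinuousOn G₁ Qs :=
    mkc _ _ (hpc.sub (continuous_snd.continuousOn.mul hqc)) hqc
  have hG₂c : ContinuousOn G₂ Qs :=
    mkc _ _ (hqc.sub (continuous_snd.continuousOn.mul hpc)) hpc
  -- nonvanishing
  have hγne : ∀ t ∈ Icc (0:ℝ) 1, γ t ≠ 0 := by
    intro t ht h
    have h' : ((p t : ℝ):ℂ) + ((q t : ℝ):ℂ) * Complex.I = 0 := h
    obtain ⟨h1, h2⟩ := reim_eq_zero.mp h'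
    have hdt := hdeg t ht
    exact hsol t t ht.1 (le_refl _) ht.2 (by rw [hdt]; exact h1) (by rw [hdt]; exact h2.symm)
  have hF₁ne : ∀ z ∈ Qs, F₁ z ≠ 0 := by
    intro z hz h
    have h' : ((p (min z.1 z.2) - f (min z.1 z.2, z.2) : ℝ):ℂ)
        + ((q z.2 - f (min z.1 z.2, z.2) : ℝ):ℂ) * Complex.I = 0 := h
    obtain ⟨h1, h2⟩ := reim_eq_zero.mp h'
    have ha0 : 0 ≤ min z.1 z.2 := le_min hz.1.1 hz.2.1
    have hab : min z.1 z.2 ≤ z.2 := min_le_right _ _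
    have hb1 : z.2 ≤ 1 := hz.2.2
    exact hsol _ _ ha0 hab hb1 (by linarith) (by linarith)
  have hG₁ne : ∀ z ∈ Qs, G₁ z ≠ 0 := by
    intro z hz h
    have h' : ((p z.1 - z.2 * q z.1 : ℝ):ℂ) + ((q z.1 : ℝ):ℂ) * Complex.I = 0 := h
    obtain ⟨h1, h2⟩ := reim_eq_zero.mp h'
    have hp' : p z.1 = 0 := by rw [h2] at h1; linarith
    apply hγne z.1 hz.1
    show ((p z.1 : ℝ):ℂ) + ((q z.1 : ℝ):ℂ) * Complex.I = 0
    rw [hp', h2]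
    simp
  have hG₂ne : ∀ z ∈ Qs, G₂ z ≠ 0 := by
    intro z hz h
    have h' : ((q z.1 - z.2 * p z.1 : ℝ):ℂ) + ((p z.1 : ℝ):ℂ) * Complex.I = 0 := h
    obtain ⟨h1, h2⟩ := reim_eq_zero.mp h'
    have hq' : q z.1 = 0 := by rw [h2] at h1; linarith
    apply hγne z.1 hz.1
    show ((p z.1 : ℝ):ℂ) + ((q z.1 : ℝ):ℂ) * Complex.I = 0
    rw [hq', h2]
    simp
  -- apply the grid theorem
  obtain ⟨N₁, hN₁, hg₁⟩ := grid F₁ hF₁c hF₁ne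
  obtain ⟨N₂, hN₂, hg₂⟩ := grid G₁ hG₁c hG₁ne
  obtain ⟨N₃, hN₃, hg₃⟩ := grid G₂ hG₂c hG₂ne
  set N : ℕ := N₁ + N₂ + N₃ with hNdef
  have hN : 0 < N := by omega
  obtain ⟨hfine₁, hB₁⟩ := hg₁ N (by omega)
  obtain ⟨hfine₂, hB₂⟩ := hg₂ N (by omega)
  obtain ⟨hfine₃, hB₃⟩ := hg₃ N (by omega)
  have hNR : (0:ℝ) < N := by exact_mod_cast hN
  have hmemq : ∀ j : ℕ, j ≤ N → ∀ s ∈ Icc (0:ℝ) 1, (((j:ℝ)/N, s) : ℝ × ℝ) ∈ Qs ∧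
      ((s, (j:ℝ)/N) : ℝ × ℝ) ∈ Qs :=
    fun j hj s hs => ⟨⟨grid_mem hN hj, hs⟩, ⟨hs, grid_mem hN hj⟩⟩
  have hmem0 : (0:ℝ) ∈ Icc (0:ℝ) 1 := ⟨le_refl _, zero_le_one⟩
  have hmem1 : (1:ℝ) ∈ Icc (0:ℝ) 1 := ⟨zero_le_one, le_refl _⟩
  -- fineness of the paths γ and pγ at grid scale
  have hγG₁ : ∀ s : ℝ, γ s = G₁ (s, 0) := by
    intro s
    show ((p s : ℝ):ℂ) + ((q s : ℝ):ℂ) * Complex.I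
      = ((p s - 0 * q s : ℝ):ℂ) + ((q s : ℝ):ℂ) * Complex.I
    push_cast
    ring
  have hpγG₁ : ∀ s : ℝ, pγ s = G₁ (s, 1) := by
    intro s
    show ((p s - q s : ℝ):ℂ) + ((q s : ℝ):ℂ) * Complex.I
      = ((p s - 1 * q s : ℝ):ℂ) + ((q s : ℝ):ℂ) * Complex.I
    push_cast
    ring
  have hmem' : ∀ j : ℕ, j < N → ((j:ℝ)+1)/N ∈ Icc (0:ℝ) 1 := by
    intro j hj
    have h := grid_mem hN (Nat.succ_le_of_lt hj)
    push_cast at h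
    exact h
  have hγfine : ∀ j < N, 0 < (γ (((j:ℝ)+1)/N) / γ ((j:ℝ)/N)).re := by
    intro j hj
    rw [hγG₁, hγG₁]
    apply hfine₂ ((j:ℝ)/N, 0) ⟨grid_mem hN (le_of_lt hj), hmem0⟩
      (((j:ℝ)+1)/N, 0) ⟨hmem' j hj, hmem0⟩
    rw [dist_pair_h, dist_grid hN]
  have hpγfine : ∀ j < N, 0 < (pγ (((j:ℝ)+1)/N) / pγ ((j:ℝ)/N)).re := by
    intro j hj
    rw [hpγG₁, hpγG₁]
    apply hfine₂ ((j:ℝ)/N, 1) ⟨grid_mem hN (le_of_lt hj), hmem1⟩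
      (((j:ℝ)+1)/N, 1) ⟨hmem' j hj, hmem1⟩
    rw [dist_pair_h, dist_grid hN]
  -- edge identities for F₁
  have hF₁bot : ∀ t ∈ Icc (0:ℝ) 1, F₁ (t, 0) = (c₀:ℂ) * Complex.I := by
    intro t ht
    show ((p (min t 0) - f (min t 0, 0) : ℝ):ℂ)
        + ((q 0 - f (min t 0, 0) : ℝ):ℂ) * Complex.I = (c₀:ℂ) * Complex.I
    rw [min_eq_right ht.1]
    have hf00 : f ((0:ℝ), (0:ℝ)) = 0 := hp0
    rw [hp0, hf00, hq0]
    push_cast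
    ring
  have hF₁rig : ∀ t ∈ Icc (0:ℝ) 1, F₁ (1, t) = γ t := by
    intro t ht
    show ((p (min 1 t) - f (min 1 t, t) : ℝ):ℂ)
        + ((q t - f (min 1 t, t) : ℝ):ℂ) * Complex.I
      = ((p t : ℝ):ℂ) + ((q t : ℝ):ℂ) * Complex.I
    rw [min_eq_right ht.2, hdeg t ht]
    push_cast
    ring
  have hF₁top : ∀ t ∈ Icc (0:ℝ) 1, F₁ (t, 1) = (starRingEnd ℂ) (pγ t) := by
    intro t ht
    show ((p (min t 1) - f (min t 1, 1) : ℝ):ℂ)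
        + ((q 1 - f (min t 1, 1) : ℝ):ℂ) * Complex.I = _
    rw [min_eq_left ht.2]
    have hft1 : f (t, 1) = q t := rfl
    have hcj : (starRingEnd ℂ) (pγ t)
        = ((p t - q t : ℝ):ℂ) + ((-(q t) : ℝ):ℂ) * Complex.I := conj_reim _ _
    rw [hft1, hq1, hcj]
    push_cast
    ring
  have hF₁lef : ∀ t ∈ Icc (0:ℝ) 1, F₁ (0, t) = Complex.I * pδ₂ t := by
    intro t ht
    show ((p (min 0 t) - f (min 0 t, t) : ℝ):ℂ)
        + ((q t - f (min 0 t, t) : ℝ):ℂ) * Complex.I = _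
    rw [min_eq_left ht.1]
    have hf0t : f ((0:ℝ), t) = p t := rfl
    have hIm : Complex.I * pδ₂ t
        = ((-(p t) : ℝ):ℂ) + ((q t - p t : ℝ):ℂ) * Complex.I := I_mul_reim _ _
    rw [hf0t, hp0, hIm]
    push_cast
    ring
  -- edge identities for G₁
  have hG₁rig : ∀ t ∈ Icc (0:ℝ) 1, G₁ (1, t) = (c₀:ℂ) := by
    intro t ht
    show ((p 1 - t * q 1 : ℝ):ℂ) + ((q 1 : ℝ):ℂ) * Complex.I = _
    rw [hp1, hq1]
    push_cast
    ring
  have hG₁lef : ∀ t ∈ Icc (0:ℝ) 1, G₁ (0, t) = (c₀:ℂ) * (Complex.I - (t:ℂ)) := by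
    intro t ht
    show ((p 0 - t * q 0 : ℝ):ℂ) + ((q 0 : ℝ):ℂ) * Complex.I = _
    rw [hp0, hq0]
    push_cast
    ring
  -- edge identities for G₂
  have hδ₂G₂ : ∀ s : ℝ, δ₂ s = G₂ (s, 0) := by
    intro s
    show ((q s : ℝ):ℂ) + ((p s : ℝ):ℂ) * Complex.I
      = ((q s - 0 * p s : ℝ):ℂ) + ((p s : ℝ):ℂ) * Complex.I
    push_cast
    ring
  have hpδ₂G₂ : ∀ s : ℝ, pδ₂ s = G₂ (s, 1) := by
    intro s
    show ((q s - p s : ℝ):ℂ) + ((p s : ℝ):ℂ) * Complex.I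
      = ((q s - 1 * p s : ℝ):ℂ) + ((p s : ℝ):ℂ) * Complex.I
    push_cast
    ring
  have hG₂rig : ∀ t ∈ Icc (0:ℝ) 1, G₂ (1, t) = (c₀:ℂ) * (Complex.I - (t:ℂ)) := by
    intro t ht
    show ((q 1 - t * p 1 : ℝ):ℂ) + ((p 1 : ℝ):ℂ) * Complex.I = _
    rw [hp1, hq1]
    push_cast
    ring
  have hG₂lef : ∀ t ∈ Icc (0:ℝ) 1, G₂ (0, t) = (c₀:ℂ) := by
    intro t ht
    show ((q 0 - t * p 0 : ℝ):ℂ) + ((p 0 : ℝ):ℂ) * Complex.I = _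
    rw [hp0, hq0]
    push_cast
    ring
  -- dvar computations
  have hc0C : ((c₀:ℝ):ℂ) ≠ 0 := Complex.ofReal_ne_zero.mpr hc0
  have d1 : dvar (fun t => F₁ (t, 0)) N = 0 := by
    rw [dvar_congr hN hF₁bot]
    exact dvar_const _ N
  have d2 : dvar (fun t => F₁ (1, t)) N = dvar γ N :=
    dvar_congr hN hF₁rig
  have d3 : dvar (fun t => F₁ (t, 1)) N = - dvar pγ N := by
    rw [dvar_congr hN hF₁top]
    exact dvar_conj pγ N hpγfine
  have d4 : dvar (fun t => F₁ (0, t)) N = dvar pδ₂ N := by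
    rw [dvar_congr hN hF₁lef]
    exact dvar_smul Complex.I_ne_zero pδ₂ N
  have d5 : dvar (fun t => G₁ (t, 0)) N = dvar γ N :=
    dvar_congr hN (fun t _ => (hγG₁ t).symm)
  have d6 : dvar (fun t => G₁ (t, 1)) N = dvar pγ N :=
    dvar_congr hN (fun t _ => (hpγG₁ t).symm)
  have d7 : dvar (fun t => G₁ (1, t)) N = 0 := by
    rw [dvar_congr hN hG₁rig]
    exact dvar_const _ N
  have d8 : dvar (fun t => G₁ (0, t)) N = π/4 := by
    rw [dvar_congr hN hG₁lef]
    rw [dvar_smul hc0C (fun t => Complex.I - (t:ℂ)) N]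
    exact dvar_ramp N hN
  have d9 : dvar (fun t => G₂ (t, 0)) N = dvar δ₂ N :=
    dvar_congr hN (fun t _ => (hδ₂G₂ t).symm)
  have d10 : dvar (fun t => G₂ (t, 1)) N = dvar pδ₂ N :=
    dvar_congr hN (fun t _ => (hpδ₂G₂ t).symm)
  have d11 : dvar (fun t => G₂ (1, t)) N = π/4 := by
    rw [dvar_congr hN hG₂rig]
    rw [dvar_smul hc0C (fun t => Complex.I - (t:ℂ)) N]
    exact dvar_ramp N hN
  have d12 : dvar (fun t => G₂ (0, t)) N = 0 := by
    rw [dvar_congr hN hG₂lef]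
    exact dvar_const _ N
  -- δ₂ versus γ
  have hδγ : ∀ t ∈ Icc (0:ℝ) 1, δ₂ t = Complex.I * ((starRingEnd ℂ) (γ t)) := by
    intro t ht
    have hcj : (starRingEnd ℂ) (γ t)
        = ((p t : ℝ):ℂ) + ((-(q t) : ℝ):ℂ) * Complex.I := conj_reim _ _
    have hIm : Complex.I * (((p t : ℝ):ℂ) + ((-(q t) : ℝ):ℂ) * Complex.I)
        = ((-(-(q t)) : ℝ):ℂ) + ((p t : ℝ):ℂ) * Complex.I := I_mul_reim _ _
    rw [hcj, hIm]
    show ((q t : ℝ):ℂ) + ((p t : ℝ):ℂ) * Complex.I = _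
    push_cast
    ring
  have d13 : dvar δ₂ N = - dvar γ N := by
    rw [dvar_congr hN hδγ]
    rw [dvar_smul Complex.I_ne_zero (fun t => (starRingEnd ℂ) (γ t)) N]
    exact dvar_conj γ N hγfine
  -- combine the three boundary identities
  rw [d1, d2, d3, d4] at hB₁
  rw [d5, d6, d7, d8] at hB₂
  rw [d9, d10, d11, d12] at hB₃
  -- hB₁ : 0 + dvar γ = -dvar pγ + dvar pδ₂
  -- hB₂ : dvar γ + 0 = dvar pγ + π/4
  -- hB₃ : dvar δ₂ + π/4 = dvar pδ₂ + 0
  have hV : dvar γ N = π/6 := by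
    have h := d13
    linarith
  -- the angle computation
  have hang := dvar_angle γ N hN (fun j hj => hγne _ (grid_mem hN hj))
  have hγ1 : γ 1 = ((c₀:ℝ):ℂ) := by
    show ((p 1 : ℝ):ℂ) + ((q 1 : ℝ):ℂ) * Complex.I = _
    rw [hp1, hq1]
    push_cast
    ring
  have hγ0 : γ 0 = ((c₀:ℝ):ℂ) * Complex.I := by
    show ((p 0 : ℝ):ℂ) + ((q 0 : ℝ):ℂ) * Complex.I = _
    rw [hp0, hq0]
    push_cast
    ring
  rw [hV, hγ1, hγ0, Complex.arg_ofReal_of_nonneg (le_of_lt hpos),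
    Complex.arg_real_mul Complex.I hpos, Complex.arg_I] at hang
  rw [← Real.Angle.coe_sub] at hang
  obtain ⟨k, hk⟩ := Real.Angle.angle_eq_iff_two_pi_dvd_sub.mp hang
  have hπ := Real.pi_pos
  have h2 : 2*π*(k:ℝ) = 2*π*(1/3) := by linarith
  have h3 : (k:ℝ) = 1/3 := by
    have h2π : (2*π : ℝ) ≠ 0 := by positivity
    exact mul_left_cancel₀ h2π h2
  have h4 : (3*k : ℤ) = 1 := by
    have : (3:ℝ)*(k:ℝ) = 1 := by rw [h3]; ring
    exact_mod_cast this
  omega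

end Equi3

open Equi3 in
theorem stmt_2 (f : ℝ × ℝ → ℝ)
    (hf : ContinuousOn f {q : ℝ × ℝ | 0 ≤ q.1 ∧ q.1 ≤ q.2 ∧ q.2 ≤ 1})
    (hdeg : ∀ a ∈ Icc (0:ℝ) 1, f (a, a) = 0) :
    ∃ x y : ℝ, 0 ≤ x ∧ x ≤ y ∧ y ≤ 1 ∧
      f (0, x) = f (x, y) ∧ f (x, y) = f (y, 1) := by
  by_contra hcon
  push_neg at hcon
  have hno : ∀ x y : ℝ, 0 ≤ x → x ≤ y → y ≤ 1 →
      f (0, x) = f (x, y) → f (x, y) ≠ f (y, 1) := by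
    intro x y h1 h2 h3 h4
    exact hcon x y h1 h2 h3 h4
  have hf00 : f ((0:ℝ), (0:ℝ)) = 0 := hdeg 0 ⟨le_refl _, zero_le_one⟩
  have hf11 : f ((1:ℝ), (1:ℝ)) = 0 := hdeg 1 ⟨zero_le_one, le_refl _⟩
  rcases lt_trichotomy (f (0, 1)) 0 with hneg | hzero | hpos
  · -- apply core to -f
    apply core (fun z => - f z)
    · exact hf.neg
    · intro a ha
      simp [hdeg a ha]
    · simpa using hneg
    · intro x y h1 h2 h3 h4 h5
      exact hno x y h1 h2 h3 (by linarith [neg_inj.mp h4]) (by linarith [neg_inj.mp h5])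
  · -- f (0,1) = 0 : the partition 0 ≤ 0 ≤ 1 works
    exact hno 0 1 (le_refl _) zero_le_one (le_refl _)
      (by rw [hf00, hzero]) (by rw [hzero, hf11])
  · exact core f hf hdeg hpos hno
end

section
/- Let φ : {(a,b) ∈ [0,1]² : a ≤ b} × [-1,1] → ℝ be continuous with φ((a,a), y) = y for all a ∈ [0,1] and y ∈ [-1,1]. Fix a segment I = [a,b] ⊆ [0,1] and distinct affine functions ℓ₁,…,ℓ_p determining the pieces Iᵢ(ξ) of I. Then the map (ξ, y) ↦ (φ(I₁(ξ), y), …, φ(I_p(ξ), y)) is continuous in the configuration ξ of pairwise distinct affine functions and in y. -/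
open Set

/-- The `i`-th piece of the partition of `[a,b]` induced by the configuration `ξ`
of affine functions: the set where the `i`-th affine function is minimal. -/
def pieceSet (p : ℕ) (ξ : Fin p → ℝ × ℝ) (a b : ℝ) (i : Fin p) : Set ℝ :=
  {x ∈ Icc a b | ∀ j, j ≠ i → (ξ i).1 * x + (ξ i).2 ≤ (ξ j).1 * x + (ξ j).2}

/-- The `i`-th piece regarded as an element of the segment space (a pair of endpoints);
an empty piece is sent to a degenerate segment. -/
noncomputable def pieceSeg (p : ℕ) (ξ : Fin p → ℝ × ℝ) (a b : ℝ) (i : Fin p) : ℝ × ℝ :=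
  (sInf (pieceSet p ξ a b i), sSup (pieceSet p ξ a b i))

/-!
The `i`-th piece depends upper semicontinuously on `ξ` (a compactness argument), and, since the
lines are distinct, a piece with more than one point contains points where `ℓᵢ` is strictly
minimal, which survive small perturbations. Hence on the configurations where the piece is
nonempty its endpoints vary continuously. Where it is empty, `φ` returns `y` by the boundary
condition; empty pieces only occur near `ξ` when the piece of `ξ` is itself empty or a point,
and then the value at `ξ` is `y` as well.
-/

open Filter Topology

theorem tendsto_csInf_of_isCompact {α ι : Type*} [ConditionallyCompleteLinearOrder α]
    [TopologicalSpace α] [OrderTopology α] [DenselyOrdered α] {l : Filter ι} {S : ι → Set α}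
    {K : Set α} (hK : IsCompact K) (hKne : K.Nonempty) (hbdd : ∀ i, BddBelow (S i))
    (hsub : ∀ U, IsOpen U → K ⊆ U → ∀ᶠ i in l, S i ⊆ U)
    (hmeet : ∀ U, IsOpen U → (U ∩ K).Nonempty → ∀ᶠ i in l, (U ∩ S i).Nonempty) :
    Tendsto (fun i => sInf (S i)) l (𝓝 (sInf K)) := by
  refine tendsto_order.2 ⟨fun c hc => ?_, fun c hc => ?_⟩
  · obtain ⟨d, hcd, hdK⟩ := exists_between hc
    filter_upwards [hsub _ isOpen_Ioi fun x hx => hdK.trans_le (csInf_le hK.bddBelow hx),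
      hmeet _ isOpen_univ (by simpa using hKne)] with i hSd hne
    exact hcd.trans_le (le_csInf (by simpa using hne) fun x hx => (hSd hx).le)
  · filter_upwards [hmeet _ isOpen_Iio ⟨_, hc, hK.sInf_mem hKne⟩] with i ⟨x, hxc, hx⟩
    exact (csInf_le (hbdd i) hx).trans_lt hxc

theorem tendsto_csSup_of_isCompact {α ι : Type*} [ConditionallyCompleteLinearOrder α]
    [TopologicalSpace α] [OrderTopology α] [DenselyOrdered α] {l : Filter ι} {S : ι → Set α}
    {K : Set α} (hK : IsCompact K) (hKne : K.Nonempty) (hbdd : ∀ i, BddAbove (S i))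
    (hsub : ∀ U, IsOpen U → K ⊆ U → ∀ᶠ i in l, S i ⊆ U)
    (hmeet : ∀ U, IsOpen U → (U ∩ K).Nonempty → ∀ᶠ i in l, (U ∩ S i).Nonempty) :
    Tendsto (fun i => sSup (S i)) l (𝓝 (sSup K)) :=
  tendsto_csInf_of_isCompact (α := αᵒᵈ) hK hKne hbdd hsub hmeet

theorem subsingleton_setOf_affine_eq {c c' : ℝ × ℝ} (h : c ≠ c') :
    {x : ℝ | c.1 * x + c.2 = c'.1 * x + c'.2}.Subsingleton := by
  intro x (hx : c.1 * x + c.2 = c'.1 * x + c'.2) y (hy : c.1 * y + c.2 = c'.1 * y + c'.2)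
  by_contra hxy
  have h1 : c.1 = c'.1 := mul_right_cancel₀ (sub_ne_zero.2 hxy) (by linarith)
  exact h (Prod.ext h1 (by rw [h1] at hx; linarith))

section pieceSet

variable {p : ℕ} {a b : ℝ}

theorem pieceSet_subset_Icc (ξ : Fin p → ℝ × ℝ) (i : Fin p) : pieceSet p ξ a b i ⊆ Icc a b :=
  fun _ hx => hx.1

theorem isClosed_pieceSet (ξ : Fin p → ℝ × ℝ) (i : Fin p) : IsClosed (pieceSet p ξ a b i) := by
  have : pieceSet p ξ a b i = Icc a b ∩
      ⋂ j ∈ ({i}ᶜ : Set (Fin p)), {x | (ξ i).1 * x + (ξ i).2 ≤ (ξ j).1 * x + (ξ j).2} := by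
    ext x; simp [pieceSet]
  rw [this]
  exact isClosed_Icc.inter (isClosed_biInter fun j _ => isClosed_le (by fun_prop) (by fun_prop))

theorem isCompact_pieceSet (ξ : Fin p → ℝ × ℝ) (i : Fin p) : IsCompact (pieceSet p ξ a b i) :=
  isCompact_Icc.of_isClosed_subset (isClosed_pieceSet ξ i) (pieceSet_subset_Icc ξ i)

theorem ordConnected_pieceSet (ξ : Fin p → ℝ × ℝ) (i : Fin p) :
    (pieceSet p ξ a b i).OrdConnected := by
  refine ⟨fun x hx y hy z ⟨hxz, hzy⟩ => ⟨⟨hx.1.1.trans hxz, hzy.trans hy.1.2⟩, fun j hj => ?_⟩⟩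
  have hxj := hx.2 j hj
  have hyj := hy.2 j hj
  rcases le_total (ξ i).1 (ξ j).1 with hle | hle <;> nlinarith

theorem pieceSeg_mem (ξ : Fin p → ℝ × ℝ) (i : Fin p) (h0 : 0 ≤ a) (h1 : b ≤ 1) :
    pieceSeg p ξ a b i ∈ {q : ℝ × ℝ | 0 ≤ q.1 ∧ q.1 ≤ q.2 ∧ q.2 ≤ 1} := by
  rcases (pieceSet p ξ a b i).eq_empty_or_nonempty with h | h
  · simp [pieceSeg, h]
  · have hK := isCompact_pieceSet (a := a) (b := b) ξ i
    exact ⟨h0.trans (hK.sInf_mem h).1.1, csInf_le_csSup h hK.bddBelow hK.bddAbove,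
      (hK.sSup_mem h).1.2.trans h1⟩

theorem pieceSeg_fst_eq_snd {ξ : Fin p → ℝ × ℝ} {i : Fin p}
    (h : (pieceSet p ξ a b i).Subsingleton) : (pieceSeg p ξ a b i).1 = (pieceSeg p ξ a b i).2 := by
  rcases h.eq_empty_or_singleton with h | ⟨c, h⟩ <;> simp [pieceSeg, h]

theorem apply_pieceSeg_of_subsingleton {φ : (ℝ × ℝ) × ℝ → ℝ}
    (hdeg : ∀ c ∈ Icc (0:ℝ) 1, ∀ y ∈ Icc (-1:ℝ) 1, φ ((c, c), y) = y) (h0 : 0 ≤ a) (h1 : b ≤ 1)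
    {ξ : Fin p → ℝ × ℝ} {i : Fin p} (h : (pieceSet p ξ a b i).Subsingleton) {y : ℝ}
    (hy : y ∈ Icc (-1:ℝ) 1) :
    φ (pieceSeg p ξ a b i, y) = y := by
  obtain ⟨hc0, -, hc1⟩ := pieceSeg_mem ξ i h0 h1
  have hfst := pieceSeg_fst_eq_snd h
  have hseg : pieceSeg p ξ a b i = ((pieceSeg p ξ a b i).1, (pieceSeg p ξ a b i).1) :=
    Prod.ext rfl hfst.symm
  rw [hseg]
  exact hdeg _ ⟨hc0, hfst.trans_le hc1⟩ y hy

theorem eventually_pieceSet_subset (ξ₀ : Fin p → ℝ × ℝ) (i : Fin p) {V : Set ℝ} (hV : IsOpen V)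
    (hsub : pieceSet p ξ₀ a b i ⊆ V) : ∀ᶠ ξ in 𝓝 ξ₀, pieceSet p ξ a b i ⊆ V := by
  have hP : ∀ x ∈ Icc a b \ V, ∀ᶠ z : (Fin p → ℝ × ℝ) × ℝ in 𝓝 (ξ₀, x),
      ∃ j ≠ i, (z.1 j).1 * z.2 + (z.1 j).2 < (z.1 i).1 * z.2 + (z.1 i).2 := by
    rintro x ⟨hx, hxV⟩
    obtain ⟨j, hj, hlt⟩ : ∃ j ≠ i, (ξ₀ j).1 * x + (ξ₀ j).2 < (ξ₀ i).1 * x + (ξ₀ i).2 := by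
      by_contra! h
      exact hxV (hsub ⟨hx, h⟩)
    have hcont : ∀ k, Continuous fun z : (Fin p → ℝ × ℝ) × ℝ => (z.1 k).1 * z.2 + (z.1 k).2 :=
      fun k => by fun_prop
    filter_upwards [((hcont j).tendsto _).eventually_lt ((hcont i).tendsto _) hlt]
      with z hz using ⟨j, hj, hz⟩
  filter_upwards [(isCompact_Icc.diff hV).eventually_forall_of_forall_eventually
    (P := fun ξ x => ∃ j ≠ i, (ξ j).1 * x + (ξ j).2 < (ξ i).1 * x + (ξ i).2) hP] with ξ hξ x hx
  by_contra hxV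
  obtain ⟨j, hj, hlt⟩ := hξ x ⟨hx.1, hxV⟩
  exact (hx.2 j hj).not_gt hlt

theorem eventually_mem_pieceSet (ξ₀ : Fin p → ℝ × ℝ) (i : Fin p) {x : ℝ} (hx : x ∈ Icc a b)
    (hlt : ∀ j ≠ i, (ξ₀ i).1 * x + (ξ₀ i).2 < (ξ₀ j).1 * x + (ξ₀ j).2) :
    ∀ᶠ ξ in 𝓝 ξ₀, x ∈ pieceSet p ξ a b i := by
  have hcont : ∀ k, Continuous fun ξ : Fin p → ℝ × ℝ => (ξ k).1 * x + (ξ k).2 :=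
    fun k => by fun_prop
  have h : ∀ j, ∀ᶠ ξ in 𝓝 ξ₀, j ≠ i → (ξ i).1 * x + (ξ i).2 < (ξ j).1 * x + (ξ j).2 :=
    fun j => eventually_imp_distrib_left.2 fun hj =>
      ((hcont i).tendsto _).eventually_lt ((hcont j).tendsto _) (hlt j hj)
  filter_upwards [eventually_all.2 h] with ξ hξ using ⟨hx, fun j hj => (hξ j hj).le⟩

theorem exists_mem_inter_pieceSet_forall_lt {ξ : Fin p → ℝ × ℝ} (hinj : Function.Injective ξ)
    {i : Fin p} (hS : (pieceSet p ξ a b i).Nontrivial) {U : Set ℝ} (hU : IsOpen U)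
    (hUS : (U ∩ pieceSet p ξ a b i).Nonempty) :
    ∃ z ∈ U ∩ pieceSet p ξ a b i, ∀ j ≠ i, (ξ i).1 * z + (ξ i).2 < (ξ j).1 * z + (ξ j).2 := by
  set S := pieceSet p ξ a b i
  have hK : IsCompact S := isCompact_pieceSet ξ i
  have hIcc : S ⊆ Icc (sInf S) (sSup S) := fun x hx =>
    ⟨csInf_le hK.bddBelow hx, le_csSup hK.bddAbove hx⟩
  obtain ⟨x, hx, y, hy, hxy⟩ := hS.exists_lt
  have hlt : sInf S < sSup S := (hIcc hx).1.trans_lt (hxy.trans_le (hIcc hy).2)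
  have hIoo : Ioo (sInf S) (sSup S) ⊆ S := Ioo_subset_Icc_self.trans <|
    (ordConnected_pieceSet ξ i).out (hK.sInf_mem hS.nonempty) (hK.sSup_mem hS.nonempty)
  obtain ⟨w, hw⟩ : (U ∩ Ioo (sInf S) (sSup S)).Nonempty := by
    obtain ⟨x, hxU, hxS⟩ := hUS
    rw [← closure_nonempty_iff]
    exact ⟨x, hU.inter_closure ⟨hxU, closure_Ioo hlt.ne ▸ hIcc hxS⟩⟩
  -- Off the finitely many crossing points of `ℓᵢ` with the other lines, `ℓᵢ` is strictly minimal.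
  have hcross : (⋃ j ∈ ({i}ᶜ : Set (Fin p)),
      {x : ℝ | (ξ i).1 * x + (ξ i).2 = (ξ j).1 * x + (ξ j).2}).Finite :=
    (toFinite _).biUnion fun j hj => (subsingleton_setOf_affine_eq (hinj.ne (Ne.symm hj))).finite
  obtain ⟨z, ⟨hzU, hzI⟩, hz⟩ :=
    ((infinite_of_mem_nhds w ((hU.inter isOpen_Ioo).mem_nhds hw)).sdiff hcross).nonempty
  exact ⟨z, ⟨hzU, hIoo hzI⟩, fun j hj =>
    ((hIoo hzI).2 j hj).lt_of_ne fun h => hz (mem_biUnion (mem_compl_singleton_iff.2 hj) h)⟩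

theorem eventually_inter_pieceSet_nonempty {ξ₀ : Fin p → ℝ × ℝ} (hinj : Function.Injective ξ₀)
    {i : Fin p} (hS : (pieceSet p ξ₀ a b i).Nontrivial) {U : Set ℝ} (hU : IsOpen U)
    (hUS : (U ∩ pieceSet p ξ₀ a b i).Nonempty) :
    ∀ᶠ ξ in 𝓝 ξ₀, (U ∩ pieceSet p ξ a b i).Nonempty := by
  obtain ⟨z, ⟨hzU, hzS⟩, hlt⟩ := exists_mem_inter_pieceSet_forall_lt hinj hS hU hUS
  filter_upwards [eventually_mem_pieceSet ξ₀ i hzS.1 hlt] with ξ hξ using ⟨z, hzU, hξ⟩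

theorem continuousWithinAt_pieceSeg {ξ₀ : Fin p → ℝ × ℝ} (hinj : Function.Injective ξ₀)
    (i : Fin p) :
    ContinuousWithinAt (fun ξ => pieceSeg p ξ a b i) {ξ | (pieceSet p ξ a b i).Nonempty} ξ₀ := by
  set N := {ξ : Fin p → ℝ × ℝ | (pieceSet p ξ a b i).Nonempty}
  have hsub : ∀ U, IsOpen U → pieceSet p ξ₀ a b i ⊆ U →
      ∀ᶠ ξ in 𝓝[N] ξ₀, pieceSet p ξ a b i ⊆ U := fun U hU h =>
    eventually_nhdsWithin_of_eventually_nhds (eventually_pieceSet_subset ξ₀ i hU h)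
  rcases (pieceSet p ξ₀ a b i).eq_empty_or_nonempty with hempty | hne
  · have hbot : 𝓝[N] ξ₀ = ⊥ := eventually_false_iff_eq_bot.1 <| by
      filter_upwards [hsub ∅ isOpen_empty hempty.subset, self_mem_nhdsWithin]
        with ξ hξ ⟨x, hx⟩ using hξ hx
    rw [ContinuousWithinAt, hbot]
    exact tendsto_bot
  -- A one-point piece may vanish under perturbation, but where it survives it stays near it.
  have hmeet : ∀ U, IsOpen U → (U ∩ pieceSet p ξ₀ a b i).Nonempty →
      ∀ᶠ ξ in 𝓝[N] ξ₀, (U ∩ pieceSet p ξ a b i).Nonempty := by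
    rintro U hU ⟨x, hxU, hx⟩
    rcases (pieceSet p ξ₀ a b i).subsingleton_or_nontrivial with hsing | hnt
    · filter_upwards [hsub U hU fun y hy => hsing hx hy ▸ hxU, self_mem_nhdsWithin]
        with ξ hξ ⟨y, hy⟩ using ⟨y, hξ hy, hy⟩
    · exact eventually_nhdsWithin_of_eventually_nhds
        (eventually_inter_pieceSet_nonempty hinj hnt hU ⟨x, hxU, hx⟩)
  have hK := isCompact_pieceSet (a := a) (b := b) ξ₀ i
  exact (tendsto_csInf_of_isCompact hK hne (fun ξ => (isCompact_pieceSet ξ i).bddBelow) hsub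
    hmeet).prodMk_nhds
    (tendsto_csSup_of_isCompact hK hne (fun ξ => (isCompact_pieceSet ξ i).bddAbove) hsub hmeet)

end pieceSet

theorem stmt_10_general (p : ℕ)
    (φ : (ℝ × ℝ) × ℝ → ℝ)
    (hφ : ContinuousOn φ
      ({q : ℝ × ℝ | 0 ≤ q.1 ∧ q.1 ≤ q.2 ∧ q.2 ≤ 1} ×ˢ Icc (-1:ℝ) 1))
    (hdeg : ∀ a ∈ Icc (0:ℝ) 1, ∀ y ∈ Icc (-1:ℝ) 1, φ ((a, a), y) = y)
    (a b : ℝ) (h0 : 0 ≤ a) (h1 : b ≤ 1) :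
    ContinuousOn
      (fun q : (Fin p → ℝ × ℝ) × ℝ => fun i : Fin p => φ (pieceSeg p q.1 a b i, q.2))
      ({ξ : Fin p → ℝ × ℝ | Function.Injective ξ} ×ˢ Icc (-1:ℝ) 1) := by
  rintro ⟨ξ₀, y₀⟩ ⟨hinj, hy₀⟩
  refine continuousWithinAt_pi.2 fun i => ?_
  set s := {ξ : Fin p → ℝ × ℝ | Function.Injective ξ} ×ˢ Icc (-1:ℝ) 1
  set N := {q : (Fin p → ℝ × ℝ) × ℝ | (pieceSet p q.1 a b i).Nonempty}
  have hmaps : MapsTo (fun q : (Fin p → ℝ × ℝ) × ℝ => (pieceSeg p q.1 a b i, q.2)) s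
      ({q : ℝ × ℝ | 0 ≤ q.1 ∧ q.1 ≤ q.2 ∧ q.2 ≤ 1} ×ˢ Icc (-1:ℝ) 1) :=
    fun q hq => ⟨pieceSeg_mem q.1 i h0 h1, hq.2⟩
  rw [← inter_union_sdiff s N, continuousWithinAt_union]
  constructor
  · have hseg : ContinuousWithinAt (fun q : (Fin p → ℝ × ℝ) × ℝ => (pieceSeg p q.1 a b i, q.2))
        (s ∩ N) (ξ₀, y₀) :=
      ((continuousWithinAt_pieceSeg hinj i).comp continuousWithinAt_fst fun _ hq => hq.2).prodMk
        continuousWithinAt_snd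
    exact (hφ _ (hmaps ⟨hinj, hy₀⟩)).comp (x := (ξ₀, y₀)) hseg (hmaps.mono_left inter_subset_left)
  rcases (pieceSet p ξ₀ a b i).subsingleton_or_nontrivial with hsing | hnt
  · refine continuousWithinAt_snd.congr (fun q ⟨hq, hqN⟩ => ?_)
      (apply_pieceSeg_of_subsingleton hdeg h0 h1 hsing hy₀)
    exact apply_pieceSeg_of_subsingleton hdeg h0 h1 (fun x hx _ _ => (hqN ⟨x, hx⟩).elim) hq.2
  · refine continuousWithinAt_of_notMem_closure fun hcl => ?_
    have hN : ∀ᶠ q in 𝓝 (ξ₀, y₀), q ∈ N := (continuous_fst.tendsto (ξ₀, y₀)).eventually <| by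
      simpa using
        eventually_inter_pieceSet_nonempty hinj hnt isOpen_univ (by simpa using hnt.nonempty)
    simpa using mem_closure_iff_nhds.1 hcl N hN

theorem stmt_10 (p : ℕ) (hp : 0 < p)
    (φ : (ℝ × ℝ) × ℝ → ℝ)
    (hφ : ContinuousOn φ
      ({q : ℝ × ℝ | 0 ≤ q.1 ∧ q.1 ≤ q.2 ∧ q.2 ≤ 1} ×ˢ Icc (-1:ℝ) 1))
    (hdeg : ∀ a ∈ Icc (0:ℝ) 1, ∀ y ∈ Icc (-1:ℝ) 1, φ ((a, a), y) = y)
    (a b : ℝ) (h0 : 0 ≤ a) (hab : a ≤ b) (h1 : b ≤ 1) :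
    ContinuousOn
      (fun q : (Fin p → ℝ × ℝ) × ℝ => fun i : Fin p => φ (pieceSeg p q.1 a b i, q.2))
      ({ξ : Fin p → ℝ × ℝ | Function.Injective ξ} ×ˢ Icc (-1:ℝ) 1) :=
  stmt_10_general p φ hφ hdeg a b h0 h1
end

section
/- Let f : {(a,b) ∈ [0,1]² : a ≤ b} → ℝ be continuous with f(a,a) = 0 for all a, and suppose that for every prime p and every continuous ψ₀ : {(a,b) : a ≤ b} × [-1,1] → ℝ with ψ₀((a,a),y) = y, negative on the bottom and positive on the top, there exists a continuous ψ₁ with the same boundary properties such that ψ₁(I,y) = 0 implies I admits a partition into p possibly degenerate subsegments I₁,…,I_p with ψ₀(Iⱼ,y) = 0 for all j. Then for every positive integer m, the segment [0,1] can be partitioned into m possibly degenerate subsegments with equal f-values. -/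
/-!
Scale `f` so that `|c f| < 1` and start from `φ₁(I, y) = y - c f(I)`. Applying the hypothesis once
for each prime factor of `m` produces `ψ` whose zeros `ψ(I, y) = 0` split `I` into `m` pieces `J`
with `φ₁(J, y) = 0`, i.e. `c f(J) = y`. Since `ψ([0,1], ·)` changes sign on `[-1, 1]`, it has a
zero by the intermediate value theorem, and the corresponding partition of `[0,1]` has equal
`f`-values.
-/

open Set

section Partition

variable {α : Type*} [Preorder α] {P Q : α → α → Prop} {n m k : ℕ} {a b c : α}

def HasPartition (P : α → α → Prop) (n : ℕ) (a b : α) : Prop :=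
  ∃ x : ℕ → α, x 0 = a ∧ x n = b ∧ (∀ i < n, x i ≤ x (i + 1)) ∧ ∀ i < n, P (x i) (x (i + 1))

theorem hasPartition_zero : HasPartition P 0 a b ↔ a = b :=
  ⟨fun ⟨_, hx0, hxn, _⟩ => hx0.symm.trans hxn,
    fun h => ⟨fun _ => a, rfl, h, by simp, by simp⟩⟩

theorem hasPartition_succ :
    HasPartition P (n + 1) a c ↔ ∃ b, HasPartition P n a b ∧ b ≤ c ∧ P b c := by
  constructor
  · rintro ⟨x, hx0, hxn, hx_le, hxP⟩
    exact ⟨x n, ⟨x, hx0, rfl, fun i hi => hx_le i (by omega), fun i hi => hxP i (by omega)⟩,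
      hxn ▸ hx_le n n.lt_succ_self, hxn ▸ hxP n n.lt_succ_self⟩
  · rintro ⟨b, ⟨x, hx0, hxn, hx_le, hxP⟩, hbc, hPbc⟩
    have hx' : ∀ i ≤ n, Function.update x (n + 1) c i = x i := fun i hi =>
      Function.update_of_ne (by omega) _ _
    refine ⟨Function.update x (n + 1) c, by rw [hx' 0 n.zero_le, hx0], by simp,
      fun i hi => ?_, fun i hi => ?_⟩ <;> rcases Nat.lt_succ_iff_lt_or_eq.1 hi with hi | rfl
    · rw [hx' i hi.le, hx' (i + 1) hi]; exact hx_le i hi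
    · rw [hx' i le_rfl, Function.update_self, hxn]; exact hbc
    · rw [hx' i hi.le, hx' (i + 1) hi]; exact hxP i hi
    · rw [hx' i le_rfl, Function.update_self, hxn]; exact hPbc

theorem HasPartition.le (h : HasPartition P n a b) : a ≤ b := by
  induction n generalizing b with
  | zero => exact (hasPartition_zero.1 h).le
  | succ n ih =>
    obtain ⟨c, hac, hcb, -⟩ := hasPartition_succ.1 h
    exact (ih hac).trans hcb

theorem HasPartition.append (h₁ : HasPartition P n a b) (h₂ : HasPartition P m b c) :
    HasPartition P (n + m) a c := by
  induction m generalizing c with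
  | zero => exact hasPartition_zero.1 h₂ ▸ h₁
  | succ m ih =>
    obtain ⟨d, hbd, hdc, hPdc⟩ := hasPartition_succ.1 h₂
    exact hasPartition_succ.2 ⟨d, ih hbd, hdc, hPdc⟩

theorem HasPartition.bind {p : ℕ} (hQ : HasPartition Q p a b)
    (hP : ∀ u v, a ≤ u → u ≤ v → v ≤ b → Q u v → HasPartition P k u v) :
    HasPartition P (p * k) a b := by
  induction p generalizing b with
  | zero => rw [zero_mul]; exact hasPartition_zero.2 (hasPartition_zero.1 hQ)
  | succ p ih =>
    obtain ⟨c, hac, hcb, hQcb⟩ := hasPartition_succ.1 hQ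
    rw [Nat.succ_mul]
    exact (ih hac fun u v hu huv hv => hP u v hu huv (hv.trans hcb)).append
      (hP c b hac.le hcb le_rfl hQcb)

end Partition

/-- A segment `[a, b] ⊆ [0, 1]` is encoded as the pair `(a, b)`. -/
def segments : Set (ℝ × ℝ) := {q | 0 ≤ q.1 ∧ q.1 ≤ q.2 ∧ q.2 ≤ 1}

theorem isCompact_segments : IsCompact segments := by
  refine (isCompact_Icc (a := ((0 : ℝ), (0 : ℝ))) (b := (1, 1))).of_isClosed_subset ?_ ?_
  · exact (isClosed_le continuous_const continuous_fst).inter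
      ((isClosed_le continuous_fst continuous_snd).inter (isClosed_le continuous_snd continuous_const))
  · rintro q ⟨h₁, h₂, h₃⟩
    exact ⟨⟨h₁, h₁.trans h₂⟩, ⟨h₂.trans h₃, h₃⟩⟩

/-- The paper's nice functions `ψ(I, y)`, for segments `I` and `y ∈ [-1, 1]`. -/
structure IsNice (ψ : (ℝ × ℝ) × ℝ → ℝ) : Prop where
  continuousOn : ContinuousOn ψ (segments ×ˢ Icc (-1) 1)
  diag : ∀ a ∈ Icc (0 : ℝ) 1, ∀ y ∈ Icc (-1 : ℝ) 1, ψ ((a, a), y) = y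
  sign : ∀ q ∈ segments, ψ (q, -1) < 0 ∧ 0 < ψ (q, 1)

theorem IsNice.exists_zero {ψ : (ℝ × ℝ) × ℝ → ℝ} (hψ : IsNice ψ) {q : ℝ × ℝ} (hq : q ∈ segments) :
    ∃ y ∈ Icc (-1 : ℝ) 1, ψ (q, y) = 0 := by
  have hcont : ContinuousOn (fun y => ψ (q, y)) (Icc (-1) 1) :=
    hψ.continuousOn.comp (Continuous.prodMk_right q).continuousOn fun y hy => ⟨hq, hy⟩
  exact intermediate_value_Icc (by norm_num) hcont ⟨(hψ.sign q hq).1.le, (hψ.sign q hq).2.le⟩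

def ZeroSplits (ψ₁ ψ₀ : (ℝ × ℝ) × ℝ → ℝ) (p : ℕ) : Prop :=
  ∀ q ∈ segments, ∀ y ∈ Icc (-1 : ℝ) 1, ψ₁ (q, y) = 0 →
    HasPartition (fun u v => ψ₀ ((u, v), y) = 0) p q.1 q.2

theorem zeroSplits_one (ψ : (ℝ × ℝ) × ℝ → ℝ) : ZeroSplits ψ ψ 1 :=
  fun q hq _ _ hψ => hasPartition_succ.2 ⟨q.1, hasPartition_zero.2 rfl, hq.2.1, hψ⟩

theorem ZeroSplits.trans {ψ₂ ψ₁ ψ₀ : (ℝ × ℝ) × ℝ → ℝ} {p k : ℕ} (h₂₁ : ZeroSplits ψ₂ ψ₁ p)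
    (h₁₀ : ZeroSplits ψ₁ ψ₀ k) : ZeroSplits ψ₂ ψ₀ (p * k) :=
  fun q hq y hy hψ => (h₂₁ q hq y hy hψ).bind fun u v hu huv hv hψ₁ =>
    h₁₀ (u, v) ⟨hq.1.trans hu, huv, hv.trans hq.2.2⟩ y hy hψ₁

theorem exists_isNice_zeroSplits
    (key : ∀ p : ℕ, p.Prime → ∀ ψ₀, IsNice ψ₀ → ∃ ψ₁, IsNice ψ₁ ∧ ZeroSplits ψ₁ ψ₀ p)
    {ψ₀ : (ℝ × ℝ) × ℝ → ℝ} (hψ₀ : IsNice ψ₀) {n : ℕ} (hn : 0 < n) :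
    ∃ ψ, IsNice ψ ∧ ZeroSplits ψ ψ₀ n := by
  induction n using induction_on_primes with
  | zero => exact absurd hn (lt_irrefl 0)
  | one => exact ⟨ψ₀, hψ₀, zeroSplits_one ψ₀⟩
  | prime_mul p a hp ih =>
    obtain ⟨ψ, hψ, hψψ₀⟩ := ih (Nat.pos_of_mul_pos_left hn)
    obtain ⟨ψ', hψ', hψ'ψ⟩ := key p hp ψ hψ
    exact ⟨ψ', hψ', hψ'ψ.trans hψψ₀⟩

theorem IsCompact.exists_pos_mul_abs_lt_one {X : Type*} [TopologicalSpace X] {K : Set X}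
    {f : X → ℝ} (hK : IsCompact K) (hf : ContinuousOn f K) :
    ∃ c > 0, ∀ x ∈ K, |c * f x| < 1 := by
  obtain ⟨C, hC⟩ := hK.exists_bound_of_continuousOn hf
  refine ⟨(|C| + 1)⁻¹, by positivity, fun x hx => ?_⟩
  have hpos : 0 < |C| + 1 := by positivity
  rw [abs_mul, abs_of_pos (inv_pos.2 hpos), inv_mul_lt_iff₀ hpos, mul_one]
  exact ((hC x hx).trans (le_abs_self C)).trans_lt (lt_add_one _)

theorem isNice_sub_mul {f : ℝ × ℝ → ℝ} (hf : ContinuousOn f segments)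
    (hdeg : ∀ a ∈ Icc (0 : ℝ) 1, f (a, a) = 0) {c : ℝ} (hc : ∀ q ∈ segments, |c * f q| < 1) :
    IsNice fun z => z.2 - c * f z.1 where
  continuousOn := continuous_snd.continuousOn.sub
    (continuousOn_const.mul (hf.comp continuous_fst.continuousOn fun _ hz => hz.1))
  diag a ha _ _ := by simp [hdeg a ha]
  sign q hq := by
    have := abs_lt.1 (hc q hq)
    constructor <;> linarith

theorem stmt_11 (f : ℝ × ℝ → ℝ)
    (hf : ContinuousOn f {q : ℝ × ℝ | 0 ≤ q.1 ∧ q.1 ≤ q.2 ∧ q.2 ≤ 1})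
    (hdeg : ∀ a ∈ Icc (0:ℝ) 1, f (a, a) = 0)
    (key : ∀ p : ℕ, p.Prime → ∀ ψ₀ : (ℝ × ℝ) × ℝ → ℝ,
      ContinuousOn ψ₀ ({q : ℝ × ℝ | 0 ≤ q.1 ∧ q.1 ≤ q.2 ∧ q.2 ≤ 1} ×ˢ Icc (-1:ℝ) 1) →
      (∀ a ∈ Icc (0:ℝ) 1, ∀ y ∈ Icc (-1:ℝ) 1, ψ₀ ((a, a), y) = y) →
      (∀ q : ℝ × ℝ, 0 ≤ q.1 → q.1 ≤ q.2 → q.2 ≤ 1 → ψ₀ (q, -1) < 0 ∧ 0 < ψ₀ (q, 1)) →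
      ∃ ψ₁ : (ℝ × ℝ) × ℝ → ℝ,
        ContinuousOn ψ₁ ({q : ℝ × ℝ | 0 ≤ q.1 ∧ q.1 ≤ q.2 ∧ q.2 ≤ 1} ×ˢ Icc (-1:ℝ) 1) ∧
        (∀ a ∈ Icc (0:ℝ) 1, ∀ y ∈ Icc (-1:ℝ) 1, ψ₁ ((a, a), y) = y) ∧
        (∀ q : ℝ × ℝ, 0 ≤ q.1 → q.1 ≤ q.2 → q.2 ≤ 1 → ψ₁ (q, -1) < 0 ∧ 0 < ψ₁ (q, 1)) ∧
        ∀ q : ℝ × ℝ, 0 ≤ q.1 → q.1 ≤ q.2 → q.2 ≤ 1 → ∀ y ∈ Icc (-1:ℝ) 1,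
          ψ₁ (q, y) = 0 →
          ∃ x : ℕ → ℝ, x 0 = q.1 ∧ x p = q.2 ∧ (∀ i < p, x i ≤ x (i + 1)) ∧
            ∀ i < p, ψ₀ ((x i, x (i + 1)), y) = 0)
    (m : ℕ) (hm : 0 < m) :
    ∃ x : ℕ → ℝ, x 0 = 0 ∧ x m = 1 ∧ (∀ i < m, x i ≤ x (i + 1)) ∧
      ∀ i < m, ∀ j < m, f (x i, x (i + 1)) = f (x j, x (j + 1)) := by
  have key' : ∀ p : ℕ, p.Prime → ∀ ψ₀, IsNice ψ₀ → ∃ ψ₁, IsNice ψ₁ ∧ ZeroSplits ψ₁ ψ₀ p := by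
    intro p hp ψ₀ hψ₀
    obtain ⟨ψ₁, hcont, hdiag, hsign, hsplit⟩ := key p hp ψ₀ hψ₀.continuousOn hψ₀.diag
      fun q h₁ h₂ h₃ => hψ₀.sign q ⟨h₁, h₂, h₃⟩
    exact ⟨ψ₁, ⟨hcont, hdiag, fun q hq => hsign q hq.1 hq.2.1 hq.2.2⟩,
      fun q hq => hsplit q hq.1 hq.2.1 hq.2.2⟩
  obtain ⟨c, hc, hcf⟩ := isCompact_segments.exists_pos_mul_abs_lt_one hf
  obtain ⟨ψ, hψ, hψφ⟩ := exists_isNice_zeroSplits key' (isNice_sub_mul hf hdeg hcf) hm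
  have h01 : ((0 : ℝ), (1 : ℝ)) ∈ segments := ⟨le_rfl, zero_le_one, le_rfl⟩
  obtain ⟨y, hy, hψy⟩ := hψ.exists_zero h01
  obtain ⟨x, hx0, hxm, hx_le, hxy⟩ := hψφ _ h01 y hy hψy
  have hfx : ∀ i < m, c * f (x i, x (i + 1)) = y := fun i hi => by
    linarith [show y - c * f (x i, x (i + 1)) = 0 from hxy i hi]
  exact ⟨x, hx0, hxm, hx_le, fun i hi j hj =>
    mul_left_cancel₀ hc.ne' ((hfx i hi).trans (hfx j hj).symm)⟩
end

section
/- Let φ : [0,1] × [-1,1] → ℝ be continuous with φ(t,-1) < 0 and φ(t,1) > 0 for all t ∈ [0,1]. Then the zero set Z = φ⁻¹(0) has a connected component that intersects both {0} × [-1,1] and {1} × [-1,1]. -/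
/-!
Suppose no component of the zero set `Z` meets both vertical sides. Since the components of a
compact Hausdorff space are intersections of clopen sets, `Z` then splits into two disjoint closed
pieces, one containing the points of `Z` on the left side and the other those on the right side.
An Urysohn function `u` equal to `-1/2` on the first piece and the left side and to `1/2` on the
second piece and the right side has no common zero with `φ`, contradicting the Poincaré–Miranda
theorem for `(u, φ)`. The latter is proved by a discrete winding-number argument: on a fine grid
the quadrants of `(u, φ)` at adjacent points are never opposite, so the quarter turns around each
cell cancel, whereas around the boundary of the rectangle they add up to a full turn.
-/

open Set

theorem exists_isClopen_of_disjoint_connectedComponent {X : Type*} [TopologicalSpace X]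
    [CompactSpace X] [T2Space X] {A B : Set X} (hA : IsClosed A) (hB : IsClosed B)
    (hAB : ∀ x ∈ A, Disjoint (connectedComponent x) B) :
    ∃ U : Set X, IsClopen U ∧ A ⊆ U ∧ Disjoint U B := by
  set π : X → ConnectedComponents X := ConnectedComponents.mk
  have hπ : Continuous π := ConnectedComponents.continuous_coe
  have hdisj : Disjoint (π '' A) (π '' B) := by
    rw [disjoint_left]
    rintro _ ⟨x, hx, rfl⟩ ⟨y, hy, hyx⟩
    exact disjoint_left.1 (hAB x hx) (ConnectedComponents.coe_eq_coe'.1 hyx) hy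
  obtain ⟨C, hC, hAC, hCB⟩ := exists_clopen_of_closed_subset_open
    (hA.isCompact.image hπ).isClosed (hB.isCompact.image hπ).isClosed.isOpen_compl
    hdisj.subset_compl_right
  exact ⟨π ⁻¹' C, hC.preimage hπ, image_subset_iff.1 hAC,
    disjoint_left.2 fun x hxC hxB => hCB hxC (mem_image_of_mem π hxB)⟩

theorem IsCompact.exists_isClosed_cover_of_disjoint_connectedComponentIn {X : Type*}
    [TopologicalSpace X] [T2Space X] {S A B : Set X} (hS : IsCompact S) (hA : IsClosed A)
    (hB : IsClosed B) (hAB : Disjoint A B)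
    (hcomp : ∀ x ∈ S ∩ A, Disjoint (connectedComponentIn S x) B) :
    ∃ F₀ F₁ : Set X, IsClosed F₀ ∧ IsClosed F₁ ∧ Disjoint F₀ F₁ ∧ A ⊆ F₀ ∧ B ⊆ F₁ ∧
      S ⊆ F₀ ∪ F₁ := by
  have : CompactSpace S := isCompact_iff_compactSpace.1 hS
  obtain ⟨U, hU, hAU, hUB⟩ := exists_isClopen_of_disjoint_connectedComponent
    (hA.preimage continuous_subtype_val) (hB.preimage continuous_subtype_val)
    (B := ((↑) : S → X) ⁻¹' B) fun x hx => by
      have := hcomp x ⟨x.2, hx⟩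
      rw [connectedComponentIn_eq_image x.2] at this
      exact (disjoint_image_iff Subtype.val_injective).1
        (this.mono_right (image_preimage_subset _ _))
  refine ⟨(↑) '' U ∪ A, (↑) '' Uᶜ ∪ B,
    ((hU.isClosed.isCompact.image continuous_subtype_val).isClosed).union hA,
    ((hU.compl.isClosed.isCompact.image continuous_subtype_val).isClosed).union hB,
    ?_, subset_union_right, subset_union_right, ?_⟩
  · simp only [disjoint_union_left, disjoint_union_right]
    refine ⟨⟨(disjoint_image_iff Subtype.val_injective).2 disjoint_compl_right, ?_⟩, ?_, hAB⟩
    · rw [disjoint_left]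
      rintro _ hyA ⟨y, hyU, rfl⟩
      exact hyU (hAU hyA)
    · rw [disjoint_left]
      rintro _ ⟨y, hyU, rfl⟩ hyB
      exact disjoint_left.1 hUB hyU hyB
  · intro x hx
    by_cases h : (⟨x, hx⟩ : S) ∈ U
    · exact Or.inl (Or.inl ⟨_, h, rfl⟩)
    · exact Or.inr (Or.inl ⟨_, h, rfl⟩)

open Finset in
theorem sum_range_top_sub_bottom_eq_right_sub_left {M : Type*} [AddCommGroup M] {m n : ℕ}
    (h v : ℕ → ℕ → M) (hcell : ∀ i < m, ∀ j < n, h i (j + 1) - h i j = v (i + 1) j - v i j) :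
    ∑ i ∈ range m, h i n - ∑ i ∈ range m, h i 0 =
      ∑ j ∈ range n, v m j - ∑ j ∈ range n, v 0 j := by
  calc _ = ∑ i ∈ range m, ∑ j ∈ range n, (h i (j + 1) - h i j) := by
        rw [← sum_sub_distrib]
        exact sum_congr rfl fun i _ => (sum_range_sub (h i) n).symm
    _ = ∑ j ∈ range n, ∑ i ∈ range m, (v (i + 1) j - v i j) := by
        rw [sum_comm]
        exact sum_congr rfl fun j hj => sum_congr rfl fun i hi =>
          hcell i (mem_range.1 hi) j (mem_range.1 hj)
    _ = _ := by
        rw [← sum_sub_distrib]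
        exact sum_congr rfl fun j _ => sum_range_sub (v · j) m

theorem abs_le_abs_sub_of_decide_ne {x y : ℝ} (h : decide (0 ≤ x) ≠ decide (0 ≤ y)) :
    |x| ≤ |x - y| := by
  rcases le_or_gt 0 x with hx | hx
  · have hy : y < 0 := by simpa [hx] using h
    rw [abs_of_nonneg hx, abs_of_pos (by linarith)]
    linarith
  · have hy : 0 ≤ y := by simpa [hx.not_ge] using h
    rw [abs_of_neg hx, abs_of_neg (by linarith)]
    linarith

/-- A closed quadrant of the plane, recorded by the signs (`true` for `≥ 0`) of the coordinates. -/
abbrev Quadrant := Bool × Bool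

namespace Quadrant

noncomputable def of (x : ℝ × ℝ) : Quadrant := (decide (0 ≤ x.1), decide (0 ≤ x.2))

def index : Quadrant → ℤ
  | (true, true) => 0
  | (false, true) => 1
  | (false, false) => 2
  | (true, false) => 3

/-- The number of quarter turns from `s` to `t`, normalised to `{-1, 0, 1, 2}`; it is the
increment of the winding number between two non-opposite quadrants. -/
def turn (s t : Quadrant) : ℤ := (t.index - s.index + 1) % 4 - 1

def Opposite (s t : Quadrant) : Prop := s.1 ≠ t.1 ∧ s.2 ≠ t.2

instance : DecidableRel Opposite := fun _ _ => inferInstanceAs (Decidable (_ ∧ _))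

theorem turn_sub_turn_eq {a b c d : Quadrant} (hab : ¬ a.Opposite b) (hcd : ¬ c.Opposite d)
    (hac : ¬ a.Opposite c) (hbd : ¬ b.Opposite d) (had : ¬ a.Opposite d)
    (hbc : ¬ b.Opposite c) : turn c d - turn a b = turn b d - turn a c := by
  set_option synthInstance.maxSize 1000 in
  revert a b c d; decide

open Finset in
theorem sum_turn_eq_sub {p : Quadrant → Prop} {θ : Quadrant → ℤ}
    (hθ : ∀ s t, p s → p t → turn s t = θ t - θ s) {n : ℕ} {f : ℕ → Quadrant}
    (hf : ∀ i ≤ n, p (f i)) : ∑ i ∈ range n, turn (f i) (f (i + 1)) = θ (f n) - θ (f 0) := by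
  rw [sum_congr rfl fun i hi => hθ _ _ (hf i (mem_range.1 hi).le) (hf (i + 1) (mem_range.1 hi)),
    sum_range_sub (fun i => θ (f i))]

theorem norm_le_dist_of_opposite {x y : ℝ × ℝ} (h : (of x).Opposite (of y)) : ‖x‖ ≤ dist x y := by
  rw [Prod.norm_def, Prod.dist_eq, Real.dist_eq, Real.dist_eq, Real.norm_eq_abs, Real.norm_eq_abs]
  exact max_le_max (abs_le_abs_sub_of_decide_ne h.1) (abs_le_abs_sub_of_decide_ne h.2)

open Finset in
theorem not_forall_adjacent_not_opposite (n : ℕ) (q : ℕ → ℕ → Quadrant)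
    (hleft : ∀ j ≤ n, (q 0 j).1 = false) (hright : ∀ j ≤ n, (q n j).1 = true)
    (hbot : ∀ i ≤ n, (q i 0).2 = false) (htop : ∀ i ≤ n, (q i n).2 = true) :
    ¬ ∀ i j i' j', i ≤ n → j ≤ n → i' ≤ n → j' ≤ n → i ≤ i' + 1 → i' ≤ i + 1 →
      j ≤ j' + 1 → j' ≤ j + 1 → ¬ (q i j).Opposite (q i' j') := by
  intro hadj
  have hgreen := sum_range_top_sub_bottom_eq_right_sub_left (m := n) (n := n)
    (fun i j => turn (q i j) (q (i + 1) j)) (fun i j => turn (q i j) (q i (j + 1)))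
    fun i hi j hj => by apply turn_sub_turn_eq <;> apply hadj <;> omega
  -- along each side the labels stay in a closed half-plane, on which `turn` has a potential `θ`
  rw [sum_turn_eq_sub (p := fun s => s.2 = true) (θ := fun s => -(s.1.toNat : ℤ)) (by decide)
      fun i hi => htop i hi,
    sum_turn_eq_sub (p := fun s => s.2 = false) (θ := fun s => s.1.toNat) (by decide)
      fun i hi => hbot i hi,
    sum_turn_eq_sub (p := fun s => s.1 = true) (θ := fun s => s.2.toNat) (by decide)
      fun j hj => hright j hj,
    sum_turn_eq_sub (p := fun s => s.1 = false) (θ := fun s => -(s.2.toNat : ℤ)) (by decide)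
      fun j hj => hleft j hj] at hgreen
  simp [hleft, hright, hbot, htop] at hgreen

end Quadrant

open AffineMap

theorem lineMap_div_mem_Icc {a b : ℝ} (hab : a ≤ b) {n i : ℕ} (hi : i ≤ n) :
    lineMap a b ((i : ℝ) / n) ∈ Icc a b := by
  rw [← segment_eq_Icc hab]
  exact lineMap_mem_segment ℝ a b
    ⟨by positivity, div_le_one_of_le₀ (by exact_mod_cast hi) (by positivity)⟩

theorem dist_lineMap_div_le (a b : ℝ) (n : ℕ) {i i' : ℕ} (h : i ≤ i' + 1) (h' : i' ≤ i + 1) :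
    dist (lineMap a b ((i : ℝ) / n)) (lineMap a b ((i' : ℝ) / n)) ≤ dist a b / n := by
  rw [dist_lineMap_lineMap, Real.dist_eq, ← sub_div, abs_div, Nat.abs_cast, div_mul_eq_mul_div]
  gcongr
  calc |(i : ℝ) - i'| * dist a b ≤ 1 * dist a b := by
        gcongr
        rw [abs_sub_le_iff]
        have : (i : ℝ) ≤ i' + 1 := by exact_mod_cast h
        have : (i' : ℝ) ≤ i + 1 := by exact_mod_cast h'
        constructor <;> linarith
    _ = dist a b := one_mul _

/-- The Poincaré–Miranda theorem on a rectangle. -/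
theorem exists_common_zero_Icc_prod_Icc {a b c d : ℝ} (hab : a ≤ b) (hcd : c ≤ d)
    {u v : ℝ × ℝ → ℝ} (hu : ContinuousOn u (Icc a b ×ˢ Icc c d))
    (hv : ContinuousOn v (Icc a b ×ˢ Icc c d))
    (hu_left : ∀ y ∈ Icc c d, u (a, y) < 0) (hu_right : ∀ y ∈ Icc c d, 0 < u (b, y))
    (hv_bot : ∀ x ∈ Icc a b, v (x, c) < 0) (hv_top : ∀ x ∈ Icc a b, 0 < v (x, d)) :
    ∃ q ∈ Icc a b ×ˢ Icc c d, u q = 0 ∧ v q = 0 := by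
  set R := Icc a b ×ˢ Icc c d
  set w : ℝ × ℝ → ℝ × ℝ := fun q => (u q, v q)
  by_contra! hw
  have hR : IsCompact R := isCompact_Icc.prod isCompact_Icc
  have hwc : ContinuousOn w R := hu.prodMk hv
  obtain ⟨ε, hε, hεw⟩ : ∃ ε > 0, ∀ q ∈ R, ε ≤ ‖w q‖ := by
    obtain ⟨q₀, hq₀, hmin⟩ := hR.exists_isMinOn
      ⟨(a, c), left_mem_Icc.2 hab, left_mem_Icc.2 hcd⟩ hwc.norm
    refine ⟨‖w q₀‖, norm_pos_iff.2 fun h => hw q₀ hq₀ ?_ ?_, fun q hq => hmin hq⟩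
    · exact congrArg Prod.fst h
    · exact congrArg Prod.snd h
  obtain ⟨δ, hδ, hδw⟩ := Metric.uniformContinuousOn_iff.1
    (hR.uniformContinuousOn_of_continuous hwc) ε hε
  obtain ⟨n, hn⟩ := exists_nat_gt ((dist a b + dist c d) / δ)
  have hn₀ : (0 : ℝ) < n := lt_of_le_of_lt (by positivity) hn
  set P : ℕ → ℕ → ℝ × ℝ := fun i j => (lineMap a b ((i : ℝ) / n), lineMap c d ((j : ℝ) / n))
  have hPR : ∀ i j, i ≤ n → j ≤ n → P i j ∈ R := fun i j hi hj =>
    ⟨lineMap_div_mem_Icc hab hi, lineMap_div_mem_Icc hcd hj⟩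
  have hP : ∀ i j i' j', i ≤ i' + 1 → i' ≤ i + 1 → j ≤ j' + 1 → j' ≤ j + 1 →
      dist (P i j) (P i' j') < δ := by
    intro i j i' j' hi hi' hj hj'
    have hab_n : dist a b / n < δ := by
      rw [div_lt_iff₀ hn₀]; rw [div_lt_iff₀ hδ] at hn; nlinarith [dist_nonneg (x := c) (y := d)]
    have hcd_n : dist c d / n < δ := by
      rw [div_lt_iff₀ hn₀]; rw [div_lt_iff₀ hδ] at hn; nlinarith [dist_nonneg (x := a) (y := b)]
    rw [Prod.dist_eq]
    exact max_lt ((dist_lineMap_div_le a b n hi hi').trans_lt hab_n)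
      ((dist_lineMap_div_le c d n hj hj').trans_lt hcd_n)
  refine Quadrant.not_forall_adjacent_not_opposite n (fun i j => Quadrant.of (w (P i j)))
    (fun j hj => ?_) (fun j hj => ?_) (fun i hi => ?_) (fun i hi => ?_) ?_
  · simpa [Quadrant.of, P, w] using hu_left _ (lineMap_div_mem_Icc hcd hj)
  · simpa [Quadrant.of, P, w, div_self hn₀.ne']
      using (hu_right _ (lineMap_div_mem_Icc hcd hj)).le
  · simpa [Quadrant.of, P, w] using hv_bot _ (lineMap_div_mem_Icc hab hi)
  · simpa [Quadrant.of, P, w, div_self hn₀.ne']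
      using (hv_top _ (lineMap_div_mem_Icc hab hi)).le
  · intro i j i' j' hi hj hi' hj' h₁ h₂ h₃ h₄ hopp
    have hwd := hδw _ (hPR i j hi hj) _ (hPR i' j' hi' hj') (hP i j i' j' h₁ h₂ h₃ h₄)
    exact (hεw _ (hPR i j hi hj)).not_gt ((Quadrant.norm_le_dist_of_opposite hopp).trans_lt hwd)

theorem exists_connectedComponentIn_zero_set_meets_left_and_right {a b c d : ℝ} (hab : a < b)
    (hcd : c ≤ d) {φ : ℝ × ℝ → ℝ} (hφ : ContinuousOn φ (Icc a b ×ˢ Icc c d))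
    (hbot : ∀ x ∈ Icc a b, φ (x, c) < 0) (htop : ∀ x ∈ Icc a b, 0 < φ (x, d)) :
    ∃ z ∈ {q ∈ Icc a b ×ˢ Icc c d | φ q = 0},
      (∃ p ∈ connectedComponentIn {q ∈ Icc a b ×ˢ Icc c d | φ q = 0} z, p.1 = a) ∧
      (∃ p ∈ connectedComponentIn {q ∈ Icc a b ×ˢ Icc c d | φ q = 0} z, p.1 = b) := by
  set S := {q ∈ Icc a b ×ˢ Icc c d | φ q = 0}
  by_contra! hS
  have hSc : IsCompact S :=
    (isCompact_Icc.prod isCompact_Icc).of_isClosed_subset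
      (hφ.preimage_isClosed_of_isClosed (isClosed_Icc.prod isClosed_Icc) isClosed_singleton)
      inter_subset_left
  obtain ⟨F₀, F₁, hF₀, hF₁, hF, hleft, hright, hSF⟩ :=
    hSc.exists_isClosed_cover_of_disjoint_connectedComponentIn (A := {p : ℝ × ℝ | p.1 = a})
      (B := {p : ℝ × ℝ | p.1 = b}) (isClosed_eq continuous_fst continuous_const)
      (isClosed_eq continuous_fst continuous_const)
      (disjoint_left.2 fun p ha hb => hab.ne (ha.symm.trans hb))
      fun z hz => disjoint_left.2 fun p hp hpb =>
        hS z hz.1 ⟨z, mem_connectedComponentIn hz.1, hz.2⟩ p hp hpb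
  obtain ⟨f, hf₀, hf₁, -⟩ := exists_continuous_zero_one_of_isClosed hF₀ hF₁ hF
  obtain ⟨q, hq, hfq, hφq⟩ := exists_common_zero_Icc_prod_Icc hab.le hcd
    (u := fun p => f p - 1 / 2) (by fun_prop) hφ
    (fun y _ => by norm_num [hf₀ (hleft (a := (a, y)) rfl)])
    (fun y _ => by norm_num [hf₁ (hright (a := (b, y)) rfl)]) hbot htop
  rcases hSF ⟨hq, hφq⟩ with h | h
  · norm_num [hf₀ h] at hfq
  · norm_num [hf₁ h] at hfq

theorem stmt_15 (φ : ℝ × ℝ → ℝ)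
    (hφ : ContinuousOn φ (Icc (0:ℝ) 1 ×ˢ Icc (-1:ℝ) 1))
    (hbot : ∀ t ∈ Icc (0:ℝ) 1, φ (t, -1) < 0)
    (htop : ∀ t ∈ Icc (0:ℝ) 1, 0 < φ (t, 1)) :
    ∃ z ∈ {q ∈ Icc (0:ℝ) 1 ×ˢ Icc (-1:ℝ) 1 | φ q = 0},
      (∃ p ∈ connectedComponentIn {q ∈ Icc (0:ℝ) 1 ×ˢ Icc (-1:ℝ) 1 | φ q = 0} z,
        p.1 = 0) ∧
      (∃ p ∈ connectedComponentIn {q ∈ Icc (0:ℝ) 1 ×ˢ Icc (-1:ℝ) 1 | φ q = 0} z,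
        p.1 = 1) :=
  exists_connectedComponentIn_zero_set_meets_left_and_right zero_lt_one (by norm_num) hφ hbot htop
end
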